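/- arXiv:math/0603038 — 5 statements merged into one kernel-verified Lean document; each statement's English description precedes it below -/
import Mathlib

section
/- Let G be a finitely generated group and suppose N₁ ⊆ N₂ ⊆ ... is an ascending chain of normal subgroups of G such that each quotient G/Nᵢ is virtually polycyclic. If G/(⋃ᵢ Nᵢ) is finitely presented, then the chain is eventually stationary, i.e., there exists k such that Nᵢ = Nₖ for all i ≥ k. -/
/-- A group is polycyclic iff it is solvable and every subgroup is finitely generated. -/
def IsPolycyclic (G : Type*) [Group G] : Prop :=
  IsSolvable G ∧ ∀ H : Subgroup G, H.FG

/-- A group is virtually polycyclic if it has a finite-index polycyclic subgroup. -/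
def IsVirtuallyPolycyclic (G : Type*) [Group G] : Prop :=
  ∃ H : Subgroup G, H.FiniteIndex ∧ IsPolycyclic H

/-- A group is virtually nilpotent if it has a finite-index nilpotent subgroup. -/
def IsVirtuallyNilpotent (G : Type*) [Group G] : Prop :=
  ∃ H : Subgroup G, H.FiniteIndex ∧ Group.IsNilpotent H

/-- A group is finitely presented if it is a presented group on finitely many
generators with finitely many relations. -/
def FinitelyPresented (G : Type*) [Group G] : Prop :=
  ∃ (α : Type) (rels : Set (FreeGroup α)),
    Finite α ∧ rels.Finite ∧ Nonempty (PresentedGroup rels ≃* G)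


/-!
By B. H. Neumann's lemma, a normal subgroup `M` of a finitely generated group `G` with `G ⧸ M`
finitely presented is the normal closure of a finite set. The finitely many normal generators
of `⋃ᵢ Nᵢ` all lie in a single `Nₖ`, so `⋃ᵢ Nᵢ = Nₖ` and the chain stops at `k`.
-/

open Subgroup

lemma FinitelyPresented.isFinitelyPresented {H : Type*} [Group H] (h : FinitelyPresented H) :
    Group.IsFinitelyPresented H := by
  obtain ⟨α, rels, _, hrels, ⟨e⟩⟩ := h
  have : Finite rels := hrels
  exact .equiv e

lemma FreeGroup.exists_comp_eq_of_surjective {α A H : Type*} [Group A] [Group H]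
    (f : FreeGroup α →* H) {ψ : A →* H} (hψ : Function.Surjective ψ) :
    ∃ θ : FreeGroup α →* A, ψ.comp θ = f :=
  ⟨FreeGroup.lift fun a => Function.surjInv hψ (f (.of a)),
    FreeGroup.ext_hom _ _ fun a => by simp [Function.surjInv_eq hψ]⟩

lemma MonoidHom.ker_le_sup_map_ker_comp {F A H : Type*} [Group F] [Group A] [Group H]
    (ψ : A →* H) (θ : F →* A) {K : Subgroup A} [K.Normal] (hK : K ≤ ψ.ker)
    (hθ : θ.range ⊔ K = ⊤) : ψ.ker ≤ (ψ.comp θ).ker.map θ ⊔ K := by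
  intro x hx
  obtain ⟨_, ⟨w, rfl⟩, k, hk, rfl⟩ := mem_sup_of_normal_right.mp (hθ ▸ mem_top x)
  have hw : w ∈ (ψ.comp θ).ker := by
    simpa [MonoidHom.mem_ker, MonoidHom.mem_ker.mp (hK hk)] using hx
  exact mul_mem_sup (mem_map_of_mem θ hw) hk

theorem MonoidHom.ker_isFinitelyNormallyGenerated {A H : Type*} [Group A] [Group H]
    [Group.FG A] [Group.IsFinitelyPresented H] {ψ : A →* H} (hψ : Function.Surjective ψ) :
    ψ.ker.IsFinitelyNormallyGenerated := by
  obtain ⟨n, p, hp, R, hR, hRp⟩ := ‹Group.IsFinitelyPresented H›.out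
  obtain ⟨θ, hθ⟩ := FreeGroup.exists_comp_eq_of_surjective p hψ
  obtain ⟨S, hS, hSfin⟩ := Group.fg_iff.mp ‹Group.FG A›
  choose v hv using fun a => hp (ψ a)
  -- Relators of the given presentation, plus relations rewriting each generator `s` of `A`
  -- as the image `θ (v s)` of a word in the generators of the presentation.
  set T := θ '' R ∪ (fun s => s⁻¹ * θ (v s)) '' S
  set K := normalClosure T
  have hKψ : K ≤ ψ.ker := by
    refine normalClosure_le_normal ?_
    rintro _ (⟨r, hr, rfl⟩ | ⟨s, -, rfl⟩)
    · rw [SetLike.mem_coe, MonoidHom.mem_ker, ← MonoidHom.comp_apply, hθ, ← MonoidHom.mem_ker,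
        ← hRp]
      exact subset_normalClosure hr
    · simp [MonoidHom.mem_ker, ← MonoidHom.comp_apply, hθ, hv]
  have hθK : θ.range ⊔ K = ⊤ := by
    refine eq_top_iff.mpr (hS ▸ closure_le _ |>.mpr fun s hs => ?_)
    have : s = θ (v s) * (s⁻¹ * θ (v s))⁻¹ := by group
    rw [this]
    exact mul_mem_sup (MonoidHom.mem_range.mpr ⟨_, rfl⟩)
      (inv_mem (subset_normalClosure (Or.inr ⟨s, hs, rfl⟩)))
  have hmapK : (ψ.comp θ).ker.map θ ≤ K := by
    rw [hθ, ← hRp, map_le_iff_le_comap]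
    exact normalClosure_le_normal fun r hr => subset_normalClosure (Or.inl ⟨r, hr, rfl⟩)
  refine ⟨T, (hR.image θ).union (hSfin.image _), le_antisymm hKψ ?_⟩
  exact (ψ.ker_le_sup_map_ker_comp θ hKψ hθK).trans (sup_le hmapK le_rfl)

theorem Subgroup.isFinitelyNormallyGenerated_of_isFinitelyPresented_quotient {G : Type*} [Group G]
    [Group.FG G] (M : Subgroup G) [M.Normal] [Group.IsFinitelyPresented (G ⧸ M)] :
    M.IsFinitelyNormallyGenerated := by
  simpa using MonoidHom.ker_isFinitelyNormallyGenerated (QuotientGroup.mk'_surjective M)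

theorem Subgroup.IsFinitelyNormallyGenerated.exists_eq_iSup_of_directed {G ι : Type*} [Group G]
    [Nonempty ι] {N : ι → Subgroup G} [∀ i, (N i).Normal] (hN : Directed (· ≤ ·) N)
    (h : (⨆ i, N i).IsFinitelyNormallyGenerated) : ∃ k, N k = ⨆ i, N i := by
  obtain ⟨T, hT, hTN⟩ := h
  have hmem : ∀ t ∈ T, ∃ i, t ∈ N i := fun t ht =>
    (mem_iSup_of_directed hN).mp (hTN ▸ subset_normalClosure ht)
  choose! idx hidx using hmem
  obtain ⟨k, hk⟩ := hN.finite_set_le (hT.image idx)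
  refine ⟨k, le_antisymm (le_iSup N k) ?_⟩
  rw [← hTN]
  exact normalClosure_le_normal fun t ht => hk _ (Set.mem_image_of_mem idx ht) (hidx t ht)

theorem stationary_chain_general (G : Type*) [Group G] [Group.FG G]
    (N : ℕ → Subgroup G) (hmono : Monotone N) [∀ i, (N i).Normal]
    [(⨆ i, N i).Normal]
    (hfp : FinitelyPresented (G ⧸ ⨆ i, N i)) :
    ∃ k, ∀ i, k ≤ i → N i = N k := by
  have := hfp.isFinitelyPresented
  obtain ⟨k, hk⟩ := (isFinitelyNormallyGenerated_of_isFinitelyPresented_quotient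
    (⨆ i, N i)).exists_eq_iSup_of_directed hmono.directed_le
  exact ⟨k, fun i hi => le_antisymm ((le_iSup N i).trans hk.ge) (hmono hi)⟩

/-- An ascending chain of normal subgroups of a finitely generated group with virtually
polycyclic quotients, whose union has finitely presented quotient, is stationary. -/
theorem stationary_chain (G : Type*) [Group G] [Group.FG G]
    (N : ℕ → Subgroup G) (hmono : Monotone N) [∀ i, (N i).Normal]
    [(⨆ i, N i).Normal]
    (hvp : ∀ i, IsVirtuallyPolycyclic (G ⧸ N i))
    (hfp : FinitelyPresented (G ⧸ ⨆ i, N i)) :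
    ∃ k, ∀ i, k ≤ i → N i = N k :=
  stationary_chain_general G N hmono hfp
end

section
/- Let G be a group acting linearly on a finite-dimensional vector space V over a field of characteristic zero, such that every element of G acts unipotently. Then the image of G in GL(V) is a nilpotent group. -/
open LinearMap Module

/-- Key combinatorial lemma: if a finite set of nonzero scalars with nonzero
coefficients has all power sums (m ≥ 1) equal to zero, the set is empty. -/
lemma aux_vanish {K : Type*} [Field K] :
    ∀ (s : Finset K), (0:K) ∉ s → ∀ c : K → K, (∀ μ ∈ s, c μ ≠ 0) →
    (∀ m : ℕ, 1 ≤ m → ∑ μ ∈ s, c μ * μ ^ m = 0) → s = ∅ := by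
  intro s
  classical
  induction s using Finset.strongInduction with
  | _ s ih =>
    intro h0 c hc hsum
    rcases s.eq_empty_or_nonempty with h | ⟨ν, hν⟩
    · exact h
    · exfalso
      have hν0 : ν ≠ 0 := fun h => h0 (h ▸ hν)
      have ht : s.erase ν ⊂ s := Finset.erase_ssubset hν
      have h0t : (0:K) ∉ s.erase ν := fun h => h0 (Finset.mem_of_mem_erase h)
      have hct : ∀ μ ∈ s.erase ν, c μ * (μ - ν) ≠ 0 := by
        intro μ hμ
        exact mul_ne_zero (hc μ (Finset.mem_of_mem_erase hμ))
          (sub_ne_zero.mpr (Finset.ne_of_mem_erase hμ))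
      have hsumt : ∀ m : ℕ, 1 ≤ m → ∑ μ ∈ s.erase ν, (c μ * (μ - ν)) * μ ^ m = 0 := by
        intro m hm
        have he : ∑ μ ∈ s, (c μ * (μ - ν)) * μ ^ m
            = ∑ μ ∈ s.erase ν, (c μ * (μ - ν)) * μ ^ m := by
          rw [← Finset.sum_erase_add s _ hν]
          simp
        rw [← he]
        have : ∑ μ ∈ s, (c μ * (μ - ν)) * μ ^ m
            = (∑ μ ∈ s, c μ * μ ^ (m+1)) - ν * ∑ μ ∈ s, c μ * μ ^ m := by
          rw [Finset.mul_sum, ← Finset.sum_sub_distrib]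
          refine Finset.sum_congr rfl fun μ _ => by ring
        rw [this, hsum (m+1) (by omega), hsum m hm, mul_zero, sub_zero]
      have hempty := ih _ ht h0t _ hct hsumt
      have hs : s = {ν} := by
        have := Finset.insert_erase hν
        rw [hempty] at this
        simpa using this.symm
      have := hsum 1 le_rfl
      rw [hs] at this
      simp only [Finset.sum_singleton, pow_one] at this
      exact (mul_ne_zero (hc ν (hs ▸ Finset.mem_singleton_self ν)) hν0) this

section TracePow

variable {K V : Type*} [Field K] [AddCommGroup V] [Module K V] [FiniteDimensional K V]

lemma aux_restrict_trace (φ : Module.End K V) (μ : K) (m : ℕ) :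
    LinearMap.trace K _ ((φ ^ m).restrict
      (Module.End.mapsTo_maxGenEigenspace_of_comm ((Commute.refl φ).pow_right m) μ)) =
      μ ^ m * (Module.finrank K (φ.maxGenEigenspace μ) : K) := by
  induction m with
  | zero =>
    have h1 : (φ ^ 0).restrict
        (Module.End.mapsTo_maxGenEigenspace_of_comm ((Commute.refl φ).pow_right 0) μ)
        = LinearMap.id := by
      ext x
      simp [LinearMap.restrict_apply]
    rw [h1]
    simp [LinearMap.trace_id]
  | succ m ih =>
    have hmapsTo := Module.End.mapsTo_maxGenEigenspace_of_comm (Commute.refl φ) μ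
    have hmapsTom := Module.End.mapsTo_maxGenEigenspace_of_comm ((Commute.refl φ).pow_right m) μ
    have hcomp : φ ^ (m+1) = (φ ^ m) ∘ₗ φ := by
      rw [pow_succ]; rfl
    have hrestr : (φ ^ (m+1)).restrict
        (Module.End.mapsTo_maxGenEigenspace_of_comm ((Commute.refl φ).pow_right (m+1)) μ)
        = (φ ^ m).restrict hmapsTom ∘ₗ φ.restrict hmapsTo := by
      rw [← LinearMap.restrict_comp hmapsTo hmapsTom]
      congr 1
    rw [hrestr]
    have hcomm : Commute ((φ ^ m).restrict hmapsTom) (φ.restrict hmapsTo) :=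
      LinearMap.restrict_commute ((Commute.refl φ).pow_left m) _ _
    have hnilp : IsNilpotent (φ.restrict hmapsTo - algebraMap K _ μ) := by
      have h := φ.isNilpotent_restrict_maxGenEigenspace_sub_algebraMap μ
      have heq : φ.restrict hmapsTo - algebraMap K _ μ
          = (φ - algebraMap K (Module.End K V) μ).restrict
            (φ.mapsTo_maxGenEigenspace_of_comm ((Commute.refl φ).sub_right
              (Algebra.commute_algebraMap_left μ φ).symm) μ) := by
        ext x
        simp [LinearMap.restrict_apply, Module.algebraMap_end_apply, LinearMap.restrict_coe_apply]
        rfl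
      rw [heq]
      exact (φ.isNilpotent_restrict_maxGenEigenspace_sub_algebraMap μ _)
    rw [LinearMap.trace_comp_eq_mul_of_commute_of_isNilpotent μ hcomm hnilp, ih]
    ring

lemma aux_alg_closed [IsAlgClosed K] [CharZero K] (φ : Module.End K V)
    (htr : ∀ m : ℕ, 1 ≤ m → LinearMap.trace K V (φ ^ m) = 0) : IsNilpotent φ := by
  classical
  have hds := DirectSum.isInternal_submodule_of_iSupIndep_of_iSup_eq_top
    φ.independent_maxGenEigenspace φ.iSup_maxGenEigenspace_eq_top
  have h_fin : {μ | φ.maxGenEigenspace μ ≠ ⊥}.Finite :=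
    WellFoundedGT.finite_ne_bot_of_iSupIndep φ.independent_maxGenEigenspace
  have key : ∀ m : ℕ, LinearMap.trace K V (φ ^ m)
      = ∑ μ ∈ h_fin.toFinset, μ ^ m * (Module.finrank K (φ.maxGenEigenspace μ) : K) := by
    intro m
    rw [LinearMap.trace_eq_sum_trace_restrict' hds h_fin
      (fun μ => Module.End.mapsTo_maxGenEigenspace_of_comm ((Commute.refl φ).pow_right m) μ)]
    exact Finset.sum_congr rfl fun μ _ => aux_restrict_trace φ μ m
  set s : Finset K := h_fin.toFinset \ {0} with hs_def
  have h0s : (0:K) ∉ s := by simp [hs_def]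
  have hc : ∀ μ ∈ s, (Module.finrank K (φ.maxGenEigenspace μ) : K) ≠ 0 := by
    intro μ hμ
    have hne : φ.maxGenEigenspace μ ≠ ⊥ := by
      have := Finset.mem_sdiff.mp hμ
      simpa using this.1
    have : Nontrivial (φ.maxGenEigenspace μ) := Submodule.nontrivial_iff_ne_bot.mpr hne
    exact Nat.cast_ne_zero.mpr (Module.finrank_pos).ne'
  have hsum : ∀ m : ℕ, 1 ≤ m →
      ∑ μ ∈ s, (Module.finrank K (φ.maxGenEigenspace μ) : K) * μ ^ m = 0 := by
    intro m hm
    have := (key m).symm.trans (htr m hm)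
    rw [← this]
    rw [Finset.sum_subset (Finset.sdiff_subset)]
    · exact Finset.sum_congr rfl fun μ _ => mul_comm _ _
    · intro μ hμ hμs
      have : μ = 0 := by
        by_contra h
        exact hμs (Finset.mem_sdiff.mpr ⟨hμ, by simpa using h⟩)
      subst this
      rw [zero_pow (by omega), mul_zero]
  have hsempty : s = ∅ := aux_vanish s h0s _ hc hsum
  have htop : φ.maxGenEigenspace 0 = ⊤ := by
    rw [eq_top_iff, ← φ.iSup_maxGenEigenspace_eq_top]
    refine iSup_le fun μ => ?_
    by_cases hμ : φ.maxGenEigenspace μ = ⊥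
    · rw [hμ]; exact bot_le
    · have hμ0 : μ = 0 := by
        by_contra h
        have : μ ∈ s := Finset.mem_sdiff.mpr ⟨by simpa using hμ, by simpa using h⟩
        rw [hsempty] at this
        simp at this
      rw [hμ0]
  rw [LinearMap.isNilpotent_iff_charpoly, LinearMap.charpoly_eq_X_pow_iff]
  intro v
  have hv : v ∈ φ.maxGenEigenspace 0 := htop ▸ Submodule.mem_top
  rw [Module.End.mem_maxGenEigenspace] at hv
  obtain ⟨n, hn⟩ := hv
  exact ⟨n, by simpa using hn⟩

end TracePow

lemma aux_mat_nilpotent {K : Type*} [Field K] [IsAlgClosed K] [CharZero K] {n : ℕ}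
    (M : Matrix (Fin n) (Fin n) K) (h : ∀ m : ℕ, 1 ≤ m → (M ^ m).trace = 0) :
    IsNilpotent M := by
  have h2 : ∀ m : ℕ, 1 ≤ m →
      LinearMap.trace K (Fin n → K) ((Matrix.toLinAlgEquiv' M) ^ m) = 0 := by
    intro m hm
    rw [← map_pow, LinearMap.trace_eq_matrix_trace K (Pi.basisFun K (Fin n))]
    have : (LinearMap.toMatrix (Pi.basisFun K (Fin n)) (Pi.basisFun K (Fin n)))
        (Matrix.toLinAlgEquiv' (M ^ m)) = M ^ m := by
      rw [LinearMap.toMatrix_eq_toMatrix']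
      exact LinearMap.toMatrix'_toLin' (M ^ m)
    rw [this]
    exact h m hm
  have hnil := aux_alg_closed (Matrix.toLinAlgEquiv' M) h2
  have := hnil.map (Matrix.toLinAlgEquiv'.symm : ((Fin n → K) →ₗ[K] (Fin n → K)) ≃ₐ[K] _)
  simpa using this

lemma aux_nilpotent_of_trace_pow {k V : Type*} [Field k] [CharZero k]
    [AddCommGroup V] [Module k V] [FiniteDimensional k V] (φ : Module.End k V)
    (h : ∀ m : ℕ, 1 ≤ m → LinearMap.trace k V (φ ^ m) = 0) : IsNilpotent φ := by
  let K := AlgebraicClosure k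
  haveI : CharZero K := charZero_of_injective_algebraMap (algebraMap k K).injective
  let b := Module.finBasis k V
  let e := LinearMap.toMatrixAlgEquiv b
  set M : Matrix (Fin (Module.finrank k V)) (Fin (Module.finrank k V)) k := e φ with hM
  have htrM : ∀ m : ℕ, 1 ≤ m → ((M.map (algebraMap k K)) ^ m).trace = 0 := by
    intro m hm
    have h1 : (M.map (algebraMap k K)) ^ m = (M ^ m).map (algebraMap k K) := by
      have := map_pow ((algebraMap k K).mapMatrix) M m
      simpa [RingHom.mapMatrix_apply] using this.symm
    have h2 : ((M ^ m).map (algebraMap k K)).trace = algebraMap k K ((M ^ m).trace) := by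
      simp [Matrix.trace, Matrix.diag, Matrix.map_apply, map_sum]
    rw [h1, h2]
    have h3 : (M ^ m).trace = LinearMap.trace k V (φ ^ m) := by
      rw [hM, ← map_pow, LinearMap.trace_eq_matrix_trace k b (φ ^ m)]
      rfl
    rw [h3, h m hm, map_zero]
  have hnilM' := aux_mat_nilpotent (M.map (algebraMap k K)) htrM
  have hnilM : IsNilpotent M := by
    obtain ⟨r, hr⟩ := hnilM'
    refine ⟨r, ?_⟩
    have h1 : (M ^ r).map (algebraMap k K) = 0 := by
      have := map_pow ((algebraMap k K).mapMatrix) M r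
      simp only [RingHom.mapMatrix_apply] at this
      rw [this, hr]
    ext i j
    have := congrFun (congrFun h1 i) j
    simpa using (algebraMap k K).injective (by simpa using this)
  have := hnilM.map (e.symm : _ ≃ₐ[k] Module.End k V)
  simpa [hM] using this


/-- Auxiliary power of a submodule of an algebra: `auxPow A n` is morally `A ^ (n+1)`. -/
def auxPow {k E : Type*} [CommSemiring k] [Semiring E] [Algebra k E]
    (A : Submodule k E) : ℕ → Submodule k E
  | 0 => A
  | n + 1 => A * auxPow A n

section AuxPow

variable {k E : Type*} [CommSemiring k] [Semiring E] [Algebra k E]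
  {A : Submodule k E}

lemma auxPow_le (hAA : A * A ≤ A) : ∀ n, auxPow A n ≤ A
  | 0 => le_rfl
  | n + 1 => le_trans (mul_le_mul' le_rfl (auxPow_le hAA n)) hAA

lemma auxPow_succ_le (hAA : A * A ≤ A) (n : ℕ) : auxPow A (n + 1) ≤ auxPow A n := by
  induction n with
  | zero => exact hAA
  | succ n ih => exact mul_le_mul' le_rfl ih

lemma auxPow_le_of_le (hAA : A * A ≤ A) {i j : ℕ} (h : i ≤ j) : auxPow A j ≤ auxPow A i := by
  induction j with
  | zero => simpa [Nat.le_zero.mp h] using le_rfl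
  | succ j ih =>
    rcases Nat.lt_or_ge i (j+1) with hlt | hge
    · exact le_trans (auxPow_succ_le hAA j) (ih (by omega))
    · have : i = j + 1 := by omega
      subst this; exact le_rfl

lemma auxPow_mul_le : ∀ i j : ℕ, auxPow A i * auxPow A j ≤ auxPow A (i + j + 1)
  | 0, j => by
    have h : (0 : ℕ) + j + 1 = j + 1 := by omega
    rw [h]
    exact le_rfl
  | i + 1, j => by
    have h : (i + 1) + j + 1 = (i + j + 1) + 1 := by omega
    rw [h]
    show (A * auxPow A i) * auxPow A j ≤ A * auxPow A (i + j + 1)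
    rw [mul_assoc]
    exact mul_le_mul' le_rfl (auxPow_mul_le i j)

lemma auxPow_mul_mem_left (hAA : A * A ≤ A) {i j : ℕ} {x y : E} (hx : x ∈ auxPow A i)
    (hy : y ∈ auxPow A j) : x * y ∈ auxPow A i :=
  auxPow_le_of_le hAA (by omega) (auxPow_mul_le i j (Submodule.mul_mem_mul hx hy))

lemma auxPow_mul_mem_right (hAA : A * A ≤ A) {i j : ℕ} {x y : E} (hx : x ∈ auxPow A i)
    (hy : y ∈ auxPow A j) : x * y ∈ auxPow A j :=
  auxPow_le_of_le hAA (by omega) (auxPow_mul_le i j (Submodule.mul_mem_mul hx hy))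

end AuxPow

attribute [local instance] LieRing.ofAssociativeRing

/-- A multiplicatively closed subspace of nilpotent endomorphisms of a
finite-dimensional space is a nilpotent algebra (via Engel's theorem). -/
lemma aux_engel {k V : Type*} [Field k] [AddCommGroup V] [Module k V]
    [FiniteDimensional k V] (A : Submodule k (Module.End k V))
    (hAA : A * A ≤ A) (hnil : ∀ x ∈ A, IsNilpotent x) :
    ∃ N : ℕ, ∀ x ∈ auxPow A N, x = (0 : Module.End k V) := by
  let L : LieSubalgebra k (Module.End k V) :=
    { carrier := A
      add_mem' := fun ha hb => A.add_mem ha hb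
      zero_mem' := A.zero_mem
      smul_mem' := fun c x hx => A.smul_mem c hx
      lie_mem' := fun {x y} hx hy => by
        have hxy : x * y ∈ A := hAA (Submodule.mul_mem_mul hx hy)
        have hyx : y * x ∈ A := hAA (Submodule.mul_mem_mul hy hx)
        simpa [Ring.lie_def] using A.sub_mem hxy hyx }
  haveI : IsNoetherian k L := by
    have h1 : Module.Finite k A := inferInstance
    have h2 : Module.Finite k L := h1
    exact inferInstance
  have hEngel : LieModule.IsNilpotent L V := by
    rw [LieModule.isNilpotent_iff_forall (R := k)]
    intro x
    have hx : (LieModule.toEnd k L V) x = (x : Module.End k V) := by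
      ext v
      rw [LieModule.toEnd_apply_apply]
      rfl
    rw [hx]
    exact hnil _ x.2
  obtain ⟨n, hn⟩ := (LieModule.isNilpotent_iff k L V).mp hEngel
  have claim : ∀ i : ℕ, ∀ x ∈ auxPow A i, ∀ v : V,
      x v ∈ LieModule.lowerCentralSeries k L V (i + 1) := by
    intro i
    induction i with
    | zero =>
      intro x hx v
      rw [LieModule.lowerCentralSeries_succ]
      have hxv : x v = ⁅(⟨x, hx⟩ : L), v⁆ := rfl
      rw [hxv]
      exact LieSubmodule.lie_mem_lie (LieSubmodule.mem_top _) (LieSubmodule.mem_top _)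
    | succ i ih =>
      intro x hx v
      let Q : Submodule k (Module.End k V) :=
        { carrier := {y | ∀ w : V, y w ∈ LieModule.lowerCentralSeries k L V (i + 1 + 1)}
          add_mem' := fun {y z} hy hz w => by
            simpa [LinearMap.add_apply] using
              (LieModule.lowerCentralSeries k L V (i + 1 + 1)).add_mem (hy w) (hz w)
          zero_mem' := fun w => by
            simpa using (LieModule.lowerCentralSeries k L V (i + 1 + 1)).zero_mem
          smul_mem' := fun c y hy w => by
            simpa [LinearMap.smul_apply] using
              (LieModule.lowerCentralSeries k L V (i + 1 + 1)).smul_mem c (hy w) }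
      have hQ : auxPow A (i + 1) ≤ Q := by
        show A * auxPow A i ≤ Q
        refine Submodule.mul_le.mpr fun a ha y hy => ?_
        intro w
        have hyw := ih y hy w
        have hrw : (a * y) w = ⁅(⟨a, ha⟩ : L), y w⁆ := rfl
        rw [hrw, LieModule.lowerCentralSeries_succ]
        exact LieSubmodule.lie_mem_lie (LieSubmodule.mem_top _) hyw
      exact hQ hx v
  refine ⟨n, fun x hx => ?_⟩
  ext v
  have h1 := claim n x hx v
  have h2 : LieModule.lowerCentralSeries k L V (n + 1) ≤
      LieModule.lowerCentralSeries k L V n :=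
    LieModule.antitone_lowerCentralSeries k L V (Nat.le_succ n)
  rw [hn] at h2
  have := h2 h1
  simpa using this


@[simp] lemma auxPow_zero {k E : Type*} [CommSemiring k] [Semiring E] [Algebra k E]
    (A : Submodule k E) : auxPow A 0 = A := rfl

open scoped commutatorElement

/-- Main auxiliary result: a subgroup of units of endomorphisms consisting of
unipotent elements is nilpotent. -/
theorem aux_main {k V : Type*} [Field k] [CharZero k]
    [AddCommGroup V] [Module k V] [FiniteDimensional k V]
    (H : Subgroup (V →ₗ[k] V)ˣ)
    (hH : ∀ u ∈ H, IsNilpotent ((u : V →ₗ[k] V) - 1)) :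
    Group.IsNilpotent H := by
  classical
  set S : Set (Module.End k V) :=
    (fun u : (V →ₗ[k] V)ˣ => (u : V →ₗ[k] V) - 1) '' H with hS_def
  set A : Submodule k (Module.End k V) := Submodule.span k S with hA_def
  have hS : ∀ u : (V →ₗ[k] V)ˣ, u ∈ H → ((u : V →ₗ[k] V) - 1) ∈ A :=
    fun u hu => Submodule.subset_span ⟨u, hu, rfl⟩
  have hAA : A * A ≤ A := by
    rw [hA_def, Submodule.span_mul_span, Submodule.span_le]
    rintro z ⟨x, hx, y, hy, rfl⟩
    obtain ⟨u, hu, rfl⟩ := hx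
    obtain ⟨w, hw, rfl⟩ := hy
    show ((u : V →ₗ[k] V) - 1) * ((w : V →ₗ[k] V) - 1) ∈ Submodule.span k S
    have hkey : ((u : V →ₗ[k] V) - 1) * ((w : V →ₗ[k] V) - 1)
        = (((u * w : (V →ₗ[k] V)ˣ) : V →ₗ[k] V) - 1)
          - ((u : V →ₗ[k] V) - 1) - ((w : V →ₗ[k] V) - 1) := by
      rw [Units.val_mul]
      noncomm_ring
    rw [hkey]
    exact A.sub_mem (A.sub_mem (hS _ (mul_mem hu hw)) (hS _ hu)) (hS _ hw)
  have htrace : ∀ x ∈ A, LinearMap.trace k V x = 0 := by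
    intro x hx
    have hle : A ≤ LinearMap.ker (LinearMap.trace k V) := by
      rw [hA_def, Submodule.span_le]
      rintro z ⟨u, hu, rfl⟩
      rw [SetLike.mem_coe, LinearMap.mem_ker]
      exact (LinearMap.isNilpotent_trace_of_isNilpotent (hH u hu)).eq_zero
    exact hle hx
  have hpowmem : ∀ x ∈ A, ∀ m : ℕ, x ^ (m + 1) ∈ A := by
    intro x hx m
    induction m with
    | zero => simpa using hx
    | succ m ih =>
      have h : x ^ (m + 2) = x ^ (m + 1) * x := by rw [pow_succ]
      rw [h]
      exact hAA (Submodule.mul_mem_mul ih hx)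
  have hnil : ∀ x ∈ A, IsNilpotent x := by
    intro x hx
    refine aux_nilpotent_of_trace_pow x fun m hm => ?_
    obtain ⟨j, rfl⟩ : ∃ j, m = j + 1 := ⟨m - 1, by omega⟩
    exact htrace _ (hpowmem x hx j)
  obtain ⟨N, hN⟩ := aux_engel A hAA hnil
  -- commutator estimate
  have hTcomm : ∀ (i : ℕ) (u v : (V →ₗ[k] V)ˣ), u ∈ H → v ∈ H →
      ((u : V →ₗ[k] V) - 1) ∈ auxPow A i →
      ((⁅u, v⁆ : (V →ₗ[k] V)ˣ) : V →ₗ[k] V) - 1 ∈ auxPow A (i + 1) := by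
    intro i u v hu hv hui
    set X : Module.End k V := (u : V →ₗ[k] V) with hX
    set Y : Module.End k V := (v : V →ₗ[k] V) with hY
    set P : Module.End k V := ((u⁻¹ * v⁻¹ : (V →ₗ[k] V)ˣ) : V →ₗ[k] V) with hP
    have hP1 : P - 1 ∈ auxPow A 0 := hS _ (mul_mem (inv_mem hu) (inv_mem hv))
    have hYXP : Y * X * P = 1 := by
      rw [hY, hX, hP, ← Units.val_mul, ← Units.val_mul]
      have : v * u * (u⁻¹ * v⁻¹) = (1 : (V →ₗ[k] V)ˣ) := by group
      rw [this, Units.val_one]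
    have hcomm_val : ((⁅u, v⁆ : (V →ₗ[k] V)ˣ) : V →ₗ[k] V) = X * Y * P := by
      rw [commutatorElement_def, hX, hY, hP]
      simp only [Units.val_mul, mul_assoc]
    have hw1 : (X - 1) * (Y - 1) ∈ auxPow A (i + 1) := by
      have := auxPow_mul_le (A := A) i 0 (Submodule.mul_mem_mul hui (hS v hv))
      simpa using this
    have hw2 : (Y - 1) * (X - 1) ∈ auxPow A (i + 1) :=
      auxPow_le_of_le hAA (by omega)
        (auxPow_mul_le (A := A) 0 i (Submodule.mul_mem_mul (hS v hv) hui))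
    have hww : X * Y - Y * X ∈ auxPow A (i + 1) := by
      have hid : X * Y - Y * X = (X - 1) * (Y - 1) - (Y - 1) * (X - 1) := by noncomm_ring
      rw [hid]
      exact (auxPow A (i + 1)).sub_mem hw1 hw2
    have hkey : ((⁅u, v⁆ : (V →ₗ[k] V)ˣ) : V →ₗ[k] V) - 1
        = (X * Y - Y * X) + (X * Y - Y * X) * (P - 1) := by
      rw [hcomm_val]
      have : (X * Y - Y * X) + (X * Y - Y * X) * (P - 1) = (X * Y) * P - (Y * X) * P := by
        noncomm_ring
      rw [this, hYXP]
    rw [hkey]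
    exact (auxPow A (i + 1)).add_mem hww (auxPow_mul_mem_left hAA hww hP1)
  -- the filtration subgroups
  let T : ℕ → Subgroup H := fun m =>
    { carrier := {u : H | (((u : (V →ₗ[k] V)ˣ) : V →ₗ[k] V) - 1) ∈ auxPow A m}
      one_mem' := by
        show ((((1 : H) : (V →ₗ[k] V)ˣ) : V →ₗ[k] V) - 1) ∈ auxPow A m
        simpa using (auxPow A m).zero_mem
      mul_mem' := by
        intro a b ha hb
        show ((((a * b : H) : (V →ₗ[k] V)ˣ) : V →ₗ[k] V) - 1) ∈ auxPow A m
        have hab : ((a * b : H) : (V →ₗ[k] V)ˣ) = (a : (V →ₗ[k] V)ˣ) * (b : (V →ₗ[k] V)ˣ) := rfl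
        rw [hab]
        have hkey : (((a : (V →ₗ[k] V)ˣ) * (b : (V →ₗ[k] V)ˣ) : (V →ₗ[k] V)ˣ) : V →ₗ[k] V) - 1
            = (((a : (V →ₗ[k] V)ˣ) : V →ₗ[k] V) - 1) * (((b : (V →ₗ[k] V)ˣ) : V →ₗ[k] V) - 1)
              + (((a : (V →ₗ[k] V)ˣ) : V →ₗ[k] V) - 1)
              + (((b : (V →ₗ[k] V)ˣ) : V →ₗ[k] V) - 1) := by
          rw [Units.val_mul]; noncomm_ring
        rw [hkey]
        exact (auxPow A m).add_mem ((auxPow A m).add_mem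
          (auxPow_mul_mem_left hAA ha hb) ha) hb
      inv_mem' := by
        intro a ha
        show ((((a⁻¹ : H) : (V →ₗ[k] V)ˣ) : V →ₗ[k] V) - 1) ∈ auxPow A m
        set X : Module.End k V := ((a : (V →ₗ[k] V)ˣ) : V →ₗ[k] V) with hX
        set Xi : Module.End k V := (((a⁻¹ : H) : (V →ₗ[k] V)ˣ) : V →ₗ[k] V) with hXi
        have hmem0 : Xi - 1 ∈ auxPow A 0 := hS _ (a⁻¹).2
        have hXiX : Xi * X = 1 := by
          rw [hXi, hX]
          have h1 : ((a⁻¹ : H) : (V →ₗ[k] V)ˣ) = ((a : H) : (V →ₗ[k] V)ˣ)⁻¹ := rfl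
          rw [h1, ← Units.val_mul, inv_mul_cancel, Units.val_one]
        have hkey : Xi - 1 = -((Xi - 1) * (X - 1) + (X - 1)) := by
          have e1 : (Xi - 1) * (X - 1) + (X - 1) = Xi * X - Xi := by noncomm_ring
          rw [e1, hXiX, neg_sub]
        rw [hkey]
        exact (auxPow A m).neg_mem ((auxPow A m).add_mem
          (auxPow_mul_mem_right hAA hmem0 ha) ha) }
  have hTmem : ∀ (m : ℕ) (u : H), u ∈ T m ↔
      (((u : (V →ₗ[k] V)ˣ) : V →ₗ[k] V) - 1) ∈ auxPow A m := fun _ _ => Iff.rfl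
  have claim2 : ∀ i : ℕ, (⊤ : Subgroup H).lowerCentralSeries i ≤ T i := by
    intro i
    induction i with
    | zero =>
      intro u _
      exact (hTmem 0 u).mpr (hS _ u.2)
    | succ i ih =>
      rw [Subgroup.lowerCentralSeries_succ, Subgroup.commutator_def]
      rw [Subgroup.closure_le]
      rintro x ⟨p, hp, q, -, rfl⟩
      rw [SetLike.mem_coe, hTmem, commutatorElement_def]
      have hco : ((p * q * p⁻¹ * q⁻¹ : H) : (V →ₗ[k] V)ˣ)
          = ⁅(p : (V →ₗ[k] V)ˣ), (q : (V →ₗ[k] V)ˣ)⁆ := by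
        rw [commutatorElement_def]; rfl
      rw [hco]
      exact hTcomm i _ _ p.2 q.2 ((hTmem i p).mp (ih hp))
  rw [Subgroup.nilpotent_iff_lowerCentralSeries]
  refine ⟨N, ?_⟩
  rw [eq_bot_iff]
  intro u hu
  have h1 : (((u : (V →ₗ[k] V)ˣ) : V →ₗ[k] V) - 1) ∈ auxPow A N :=
    (hTmem N u).mp (claim2 N hu)
  have h2 := hN _ h1
  rw [sub_eq_zero] at h2
  have h3 : (u : (V →ₗ[k] V)ˣ) = 1 := Units.ext h2
  exact Subgroup.mem_bot.mpr (Subtype.ext h3)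

/-- A group acting unipotently on a finite-dimensional vector space over a field of
characteristic zero has nilpotent image in `GL(V)`. -/
theorem unipotent_image_nilpotent
    (k : Type*) [Field k] [CharZero k]
    (V : Type*) [AddCommGroup V] [Module k V] [FiniteDimensional k V]
    (G : Type*) [Group G] (ρ : G →* (V →ₗ[k] V)ˣ)
    (hunip : ∀ g : G, IsNilpotent ((ρ g : V →ₗ[k] V) - 1)) :
    Group.IsNilpotent ρ.range := by
  apply aux_main
  rintro u ⟨g, rfl⟩
  exact hunip g
end

section
/- Let Q be a group whose center Z(Q) has finite index in Q. Then the derived subgroup Q' is finite. -/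
open scoped commutatorElement

/-- Schur's theorem: if the center of `Q` has finite index then the derived subgroup
of `Q` is finite. -/
theorem schur_commutator_finite
    (Q : Type*) [Group Q] (h : (Subgroup.center Q).FiniteIndex) :
    Finite (commutator Q) := by
  haveI := h
  haveI : Finite (Q ⧸ Subgroup.center Q) := Subgroup.finite_quotient_of_finiteIndex
  have conj : ∀ (g z x : Q), (∀ a, a * z = z * a) → (g * z) * x * (g * z)⁻¹ = g * x * g⁻¹ := by
    intro g z x hz
    have hx : z * x * z⁻¹ = x := by rw [← hz x, mul_inv_cancel_right]
    calc (g * z) * x * (g * z)⁻¹ = g * (z * x * z⁻¹) * g⁻¹ := by group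
      _ = g * x * g⁻¹ := by rw [hx]
  have comm_eq : ∀ (g k z w : Q), z ∈ Subgroup.center Q → w ∈ Subgroup.center Q →
      ⁅g * z, k * w⁆ = ⁅g, k⁆ := by
    intro g k z w hz hw
    rw [Subgroup.mem_center_iff] at hz hw
    calc ⁅g * z, k * w⁆ = (g * z) * (k * w) * (g * z)⁻¹ * (k * w)⁻¹ := by
          rw [commutatorElement_def]
      _ = g * (k * w) * g⁻¹ * (w⁻¹ * k⁻¹) := by rw [conj g z (k * w) hz, mul_inv_rev]
      _ = g * k * (w * g⁻¹) * (w⁻¹ * k⁻¹) := by group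
      _ = g * k * (g⁻¹ * w) * (w⁻¹ * k⁻¹) := by rw [← hw g⁻¹]
      _ = ⁅g, k⁆ := by rw [commutatorElement_def]; group
  haveI : Finite (commutatorSet Q) := by
    have hsub : commutatorSet Q ⊆ Set.range
        (fun p : (Q ⧸ Subgroup.center Q) × (Q ⧸ Subgroup.center Q) => ⁅p.1.out, p.2.out⁆) := by
      rintro x ⟨g, k, rfl⟩
      refine ⟨(QuotientGroup.mk g, QuotientGroup.mk k), ?_⟩
      obtain ⟨z, hz⟩ := QuotientGroup.mk_out_eq_mul (Subgroup.center Q) g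
      obtain ⟨w, hw⟩ := QuotientGroup.mk_out_eq_mul (Subgroup.center Q) k
      simp only [hz, hw]
      exact comm_eq g k z w z.2 w.2
    exact Set.Finite.subset (Set.finite_range _) hsub
  infer_instance
end

section
/- Every finitely generated virtually polycyclic group is finitely presented. -/
section AuxFP
open Subgroup Function


theorem FinitelyPresented.of_mulEquiv {A B : Type*} [Group A] [Group B]
    (h : FinitelyPresented A) (e : A ≃* B) : FinitelyPresented B := by
  obtain ⟨α, rels, hα, hrels, ⟨i⟩⟩ := h
  exact ⟨α, rels, hα, hrels, ⟨i.trans e⟩⟩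

theorem fp_of_presentation {G : Type*} [Group G] (α : Type) [Finite α]
    (f : FreeGroup α →* G) (hsurj : Surjective f) (S : Set (FreeGroup α)) (hS : S.Finite)
    (hker : f.ker = Subgroup.normalClosure S) : FinitelyPresented G := by
  refine ⟨α, S, ‹_›, hS, ⟨?_⟩⟩
  exact ((QuotientGroup.quotientMulEquivOfEq hker.symm).trans
    (QuotientGroup.quotientKerEquivOfSurjective f hsurj))

theorem fp_exists_presentation {G : Type*} [Group G] (h : FinitelyPresented G) :
    ∃ (α : Type) (_ : Finite α) (f : FreeGroup α →* G) (S : Set (FreeGroup α)),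
      Surjective f ∧ S.Finite ∧ f.ker = Subgroup.normalClosure S := by
  obtain ⟨α, rels, hα, hrels, ⟨e⟩⟩ := h
  refine ⟨α, hα, e.toMonoidHom.comp (PresentedGroup.mk rels), rels,
    e.surjective.comp (PresentedGroup.mk_surjective rels), hrels, ?_⟩
  ext x
  simp only [MonoidHom.mem_ker, MonoidHom.comp_apply, MulEquiv.coe_toMonoidHom,
    EmbeddingLike.map_eq_one_iff]
  exact QuotientGroup.eq_one_iff x


section Finite
variable {G : Type*} [Group G]

theorem fp_of_finite' (G : Type*) [Group G] [Finite G] :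
    ∃ (α : Type) (_ : Finite α) (f : FreeGroup α →* G) (S : Set (FreeGroup α)),
      Surjective f ∧ S.Finite ∧ f.ker = Subgroup.normalClosure S := by
  have : Fintype G := Fintype.ofFinite G
  set n := Fintype.card G with hn
  set e : Fin n ≃ G := (Fintype.equivFin G).symm with he
  set f : FreeGroup (Fin n) →* G := FreeGroup.lift e with hf
  have hfof : ∀ i, f (FreeGroup.of i) = e i := fun i => FreeGroup.lift_apply_of
  set r : Fin n → Fin n → FreeGroup (Fin n) := fun i j =>
    FreeGroup.of i * FreeGroup.of j * (FreeGroup.of (e.symm (e i * e j)))⁻¹ with hr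
  set S : Set (FreeGroup (Fin n)) := Set.range (uncurry r) with hS
  have hsurj : Surjective f := by
    intro g
    exact ⟨FreeGroup.of (e.symm g), by simp [hfof]⟩
  refine ⟨Fin n, inferInstance, f, S, hsurj, Set.finite_range _, ?_⟩
  have hSker : ∀ s ∈ S, f s = 1 := by
    rintro s ⟨⟨i, j⟩, rfl⟩
    simp only [uncurry, hr, map_mul, map_inv, hfof, Equiv.apply_symm_apply]
    group
  apply le_antisymm
  · -- ker f ≤ normalClosure S
    intro w hw
    have hw1 : f w = 1 := hw
    -- section hom
    set q : FreeGroup (Fin n) →* FreeGroup (Fin n) ⧸ Subgroup.normalClosure S :=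
      QuotientGroup.mk' _ with hq
    have hrel : ∀ x y : G, q (FreeGroup.of (e.symm (x * y)))
        = q (FreeGroup.of (e.symm x)) * q (FreeGroup.of (e.symm y)) := by
      intro x y
      have : q (r (e.symm x) (e.symm y)) = 1 := by
        apply (QuotientGroup.eq_one_iff _).2
        exact Subgroup.subset_normalClosure ⟨(e.symm x, e.symm y), rfl⟩
      have key : q (FreeGroup.of (e.symm x)) * q (FreeGroup.of (e.symm y)) *
          (q (FreeGroup.of (e.symm (x * y))))⁻¹ = 1 := by
        simpa [hr, Equiv.apply_symm_apply] using this
      exact (mul_inv_eq_one.mp key).symm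
    set ψ : G →* FreeGroup (Fin n) ⧸ Subgroup.normalClosure S :=
      MonoidHom.mk' (fun x => q (FreeGroup.of (e.symm x))) hrel with hψ
    have hcomp : ψ.comp f = q := by
      apply FreeGroup.ext_hom
      intro i
      simp [hψ, hfof]
    have : q w = 1 := by
      have := congrArg (fun h : FreeGroup (Fin n) →* _ => h w) hcomp
      simp only [MonoidHom.comp_apply] at this
      rw [← this, hw1, map_one]
    exact (QuotientGroup.eq_one_iff _).1 this
  · exact Subgroup.normalClosure_le_normal fun s hs => hSker s hs

theorem fp_of_finite (G : Type*) [Group G] [Finite G] : FinitelyPresented G := by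
  obtain ⟨α, _, f, S, hs, hS, hk⟩ := fp_of_finite' G
  exact fp_of_presentation α f hs S hS hk

end Finite

theorem fp_of_cyclic {G : Type*} [Group G] (g : G)
    (hg : Subgroup.closure ({g} : Set G) = ⊤) : FinitelyPresented G := by
  by_cases hfin : IsOfFinOrder g
  · -- G is finite
    have : Finite G := by
      have h1 : (Set.univ : Set G) ⊆ (Subgroup.zpowers g : Set G) := by
        intro x _
        have : x ∈ Subgroup.closure ({g} : Set G) := hg ▸ Subgroup.mem_top x
        obtain ⟨m, hm⟩ := Subgroup.mem_closure_singleton.1 this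
        exact ⟨m, hm⟩
      have := hfin.finite_zpowers.subset h1
      exact Set.finite_univ_iff.mp this
    exact fp_of_finite G
  · set f : FreeGroup Unit →* G := FreeGroup.lift (fun _ => g) with hf
    have hsurj : Surjective f := by
      have : f.range = ⊤ := by
        rw [hf, FreeGroup.range_lift_eq_closure]
        rw [Set.range_const]
        exact hg
      exact MonoidHom.range_eq_top.1 this
    apply fp_of_presentation Unit f hsurj ∅ Set.finite_empty
    have hncl : Subgroup.normalClosure (∅ : Set (FreeGroup Unit)) = ⊥ :=
      le_antisymm (Subgroup.normalClosure_le_normal (by simp)) bot_le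
    rw [hncl]
    rw [MonoidHom.ker_eq_bot_iff]
    intro w w' hww'
    -- every element of FreeGroup Unit is a zpower of `of ()`
    have hmem : ∀ v : FreeGroup Unit, ∃ m : ℤ, (FreeGroup.of ()) ^ m = v := by
      intro v
      have h1 : v ∈ Subgroup.closure (Set.range (FreeGroup.of : Unit → FreeGroup Unit)) := by
        rw [FreeGroup.closure_range_of]; trivial
      have h2 : Set.range (FreeGroup.of : Unit → FreeGroup Unit) = {FreeGroup.of ()} := by
        ext v
        constructor
        · rintro ⟨⟨⟩, rfl⟩; rfl
        · rintro rfl; exact ⟨(), rfl⟩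
      rw [h2] at h1
      exact Subgroup.mem_closure_singleton.1 h1
    obtain ⟨m, rfl⟩ := hmem w
    obtain ⟨m', rfl⟩ := hmem w'
    simp only [map_zpow] at hww'
    have hfo : f (FreeGroup.of ()) = g := FreeGroup.lift_apply_of
    rw [hfo] at hww'
    have : g ^ (m - m') = 1 := by
      rw [zpow_sub, hww', mul_inv_cancel]
    have hmm : m - m' = 0 := by
      by_contra hne
      exact hfin (isOfFinOrder_iff_zpow_eq_one.2 ⟨m - m', hne, this⟩)
    have : m = m' := by omega
    rw [this]


theorem closure_normal_of_conj {G : Type*} [Group G] {S T : Set G}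
    (hT : Subgroup.closure T = ⊤)
    (h : ∀ t ∈ T, ∀ s ∈ S, t * s * t⁻¹ ∈ Subgroup.closure S ∧
      t⁻¹ * s * t ∈ Subgroup.closure S) :
    (Subgroup.closure S).Normal := by
  have step : ∀ g : G, (∀ s ∈ S, g * s * g⁻¹ ∈ Subgroup.closure S) →
      ∀ m ∈ Subgroup.closure S, g * m * g⁻¹ ∈ Subgroup.closure S := by
    intro g hgen m hm
    refine Subgroup.closure_induction (fun s hs => hgen s hs) (by simpa using Subgroup.one_mem _) ?_ ?_ hm
    · intro x y _ _ px py
      have hxy : g * (x * y) * g⁻¹ = (g * x * g⁻¹) * (g * y * g⁻¹) := by group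
      rw [hxy]; exact mul_mem px py
    · intro x _ px
      have hx : g * x⁻¹ * g⁻¹ = (g * x * g⁻¹)⁻¹ := by group
      rw [hx]; exact inv_mem px
  set K : Subgroup G :=
    { carrier := {g | (∀ s ∈ S, g * s * g⁻¹ ∈ Subgroup.closure S) ∧
        (∀ s ∈ S, g⁻¹ * s * g ∈ Subgroup.closure S)}
      one_mem' := by
        constructor <;> intro s hs <;> simpa using Subgroup.subset_closure hs
      mul_mem' := by
        rintro a b ⟨ha1, ha2⟩ ⟨hb1, hb2⟩
        constructor
        · intro s hs
          have : a * b * s * (a * b)⁻¹ = a * (b * s * b⁻¹) * a⁻¹ := by group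
          rw [this]
          exact step a ha1 _ (hb1 s hs)
        · intro s hs
          have : (a * b)⁻¹ * s * (a * b) = b⁻¹ * (a⁻¹ * s * a) * b⁻¹⁻¹ := by group
          rw [this]
          refine step b⁻¹ ?_ _ (ha2 s hs)
          intro s' hs'
          simpa using hb2 s' hs'
      inv_mem' := by
        rintro a ⟨ha1, ha2⟩
        constructor
        · intro s hs; simpa using ha2 s hs
        · intro s hs; simpa using ha1 s hs } with hK
  have hTK : ∀ g : G, g ∈ K := by
    intro g
    have : Subgroup.closure T ≤ K := by
      rw [Subgroup.closure_le]
      intro t ht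
      exact ⟨fun s hs => (h t ht s hs).1, fun s hs => (h t ht s hs).2⟩
    exact this (hT ▸ Subgroup.mem_top g)
  constructor
  intro m hm g
  exact step g (hTK g).1 m hm

theorem fp_extension {G : Type*} [Group G] (N : Subgroup G) [N.Normal]
    (hN : FinitelyPresented ↥N) (hQ : FinitelyPresented (G ⧸ N)) :
    FinitelyPresented G := by
  classical
  obtain ⟨α, finα, fN, SN, surjN, finSN, kerN⟩ := fp_exists_presentation hN
  obtain ⟨β, finβ, fQ, SQ, surjQ, finSQ, kerQ⟩ := fp_exists_presentation hQ
  choose ℓ hℓ using fun b : β => QuotientGroup.mk_surjective (fQ (FreeGroup.of b))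
  -- hℓ : ∀ b, ↑(ℓ b) = fQ (FreeGroup.of b)
  have preH : ∀ g : G, g ∈ N → ∃ u : FreeGroup α, ((fN u : ↥N) : G) = g := by
    intro g hg
    obtain ⟨u, hu⟩ := surjN ⟨g, hg⟩
    exact ⟨u, by rw [hu]⟩
  choose preFun hpreFun using preH
  set pre : G → FreeGroup α := fun g => if h : g ∈ N then preFun g h else 1 with hpredef
  have hpre : ∀ g : G, g ∈ N → ((fN (pre g) : ↥N) : G) = g := by
    intro g hg
    simp only [hpredef, dif_pos hg]
    exact hpreFun g hg
  set ι : FreeGroup α →* FreeGroup (α ⊕ β) := FreeGroup.map Sum.inl with hι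
  set κ : FreeGroup β →* FreeGroup (α ⊕ β) := FreeGroup.map Sum.inr with hκ
  set f : FreeGroup (α ⊕ β) →* G :=
    FreeGroup.lift (Sum.elim (fun a => ((fN (FreeGroup.of a) : ↥N) : G)) ℓ) with hfdef
  have hfinl : ∀ a : α, f (FreeGroup.of (Sum.inl a)) = ((fN (FreeGroup.of a) : ↥N) : G) := by
    intro a; simp [hfdef]
  have hfinr : ∀ b : β, f (FreeGroup.of (Sum.inr b)) = ℓ b := by
    intro b; simp [hfdef]
  have hfι : ∀ w, f (ι w) = ((fN w : ↥N) : G) := by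
    intro w
    have : f.comp ι = N.subtype.comp fN := by
      apply FreeGroup.ext_hom
      intro a
      simp only [MonoidHom.comp_apply, hι, FreeGroup.map.of, Subgroup.coe_subtype]
      exact hfinl a
    exact DFunLike.congr_fun this w
  have hfκ : ∀ w, (QuotientGroup.mk (f (κ w)) : G ⧸ N) = fQ w := by
    intro w
    have : ((QuotientGroup.mk' N).comp f).comp κ = fQ := by
      apply FreeGroup.ext_hom
      intro b
      simp only [MonoidHom.comp_apply, hκ, FreeGroup.map.of, QuotientGroup.mk'_apply]
      rw [hfinr b, hℓ b]
    exact DFunLike.congr_fun this w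
  have hsurj : Surjective f := by
    intro g
    obtain ⟨v, hv⟩ := surjQ (QuotientGroup.mk g)
    have hvN : (f (κ v))⁻¹ * g ∈ N := by
      rw [← QuotientGroup.eq]
      rw [hfκ, hv]
    refine ⟨κ v * ι (pre ((f (κ v))⁻¹ * g)), ?_⟩
    rw [map_mul, hfι, hpre _ hvN]
    group
  -- the relator sets
  set cW : β → Bool → FreeGroup (α ⊕ β) := fun b s =>
    cond s (FreeGroup.of (Sum.inr b)) (FreeGroup.of (Sum.inr b))⁻¹ with hcW
  set RA : Set (FreeGroup (α ⊕ β)) := ι '' SN with hRA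
  set RB : Set (FreeGroup (α ⊕ β)) :=
    (fun t => κ t * (ι (pre (f (κ t))))⁻¹) '' SQ with hRB
  set RC : Set (FreeGroup (α ⊕ β)) :=
    Set.range (fun x : α × β × Bool =>
      cW x.2.1 x.2.2 * FreeGroup.of (Sum.inl x.1) * (cW x.2.1 x.2.2)⁻¹ *
        (ι (pre (f (cW x.2.1 x.2.2 * FreeGroup.of (Sum.inl x.1) * (cW x.2.1 x.2.2)⁻¹))))⁻¹)
    with hRC
  set R : Set (FreeGroup (α ⊕ β)) := RA ∪ RB ∪ RC with hR
  have hRfin : R.Finite :=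
    ((finSN.image _).union (finSQ.image _)).union (Set.finite_range _)
  have hκSQ : ∀ t ∈ SQ, f (κ t) ∈ N := by
    intro t ht
    have h1 : (QuotientGroup.mk (f (κ t)) : G ⧸ N) = 1 := by
      rw [hfκ]
      have : t ∈ fQ.ker := by
        rw [kerQ]; exact Subgroup.subset_normalClosure ht
      exact this
    exact (QuotientGroup.eq_one_iff _).1 h1
  have hconjN : ∀ (a : α) (b : β) (s : Bool),
      f (cW b s * FreeGroup.of (Sum.inl a) * (cW b s)⁻¹) ∈ N := by
    intro a b s
    rw [map_mul, map_mul, map_inv]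
    have h1 : f (FreeGroup.of (Sum.inl a)) ∈ N := by
      rw [hfinl a]; exact SetLike.coe_mem _
    exact Subgroup.Normal.conj_mem ‹N.Normal› _ h1 (f (cW b s))
  have hRker : ∀ r ∈ R, f r = 1 := by
    rintro r (hr | hr)
    · rcases hr with hr | hr
      · obtain ⟨s, hs, rfl⟩ := hr
        rw [hfι]
        have : s ∈ fN.ker := by rw [kerN]; exact Subgroup.subset_normalClosure hs
        rw [MonoidHom.mem_ker] at this
        rw [this]; rfl
      · obtain ⟨t, ht, rfl⟩ := hr
        rw [map_mul, map_inv, hfι, hpre _ (hκSQ t ht)]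
        group
    · obtain ⟨⟨a, b, s⟩, rfl⟩ := hr
      rw [map_mul, map_inv, hfι, hpre _ (hconjN a b s)]
      group
  set K : Subgroup (FreeGroup (α ⊕ β)) := Subgroup.normalClosure R with hKdef
  set q : FreeGroup (α ⊕ β) →* FreeGroup (α ⊕ β) ⧸ K := QuotientGroup.mk' K with hq
  have hqR : ∀ r ∈ R, q r = 1 := fun r hr =>
    (QuotientGroup.eq_one_iff r).2 (Subgroup.subset_normalClosure hr)
  have hKker : K ≤ f.ker := Subgroup.normalClosure_le_normal
    (fun r hr => MonoidHom.mem_ker.2 (hRker r hr))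
  set π : FreeGroup (α ⊕ β) ⧸ K →* G := QuotientGroup.lift K f hKker with hπ
  have hπq : ∀ w, π (q w) = f w := fun w => QuotientGroup.lift_mk' K _ w
  set Mgen : Set (FreeGroup (α ⊕ β) ⧸ K) :=
    Set.range (fun a : α => q (FreeGroup.of (Sum.inl a))) with hMgen
  set M : Subgroup (FreeGroup (α ⊕ β) ⧸ K) := Subgroup.closure Mgen with hM
  have hm1 : ∀ w : FreeGroup α, q (ι w) ∈ M := by
    intro w
    have hw : w ∈ Subgroup.closure (Set.range (FreeGroup.of : α → FreeGroup α)) := by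
      rw [FreeGroup.closure_range_of]; trivial
    have hle : Subgroup.closure (Set.range (FreeGroup.of : α → FreeGroup α)) ≤
        M.comap (q.comp ι) := by
      rw [Subgroup.closure_le]
      rintro _ ⟨a, rfl⟩
      refine Subgroup.subset_closure ⟨a, ?_⟩
      simp [hι]
    exact hle hw
  have hm2 : ∀ (a : α) (b : β) (s : Bool),
      q (cW b s) * q (FreeGroup.of (Sum.inl a)) * (q (cW b s))⁻¹ ∈ M := by
    intro a b s
    have h1 := hqR _ (Or.inr ⟨(a, b, s), rfl⟩)
    rw [map_mul, map_inv, mul_inv_eq_one, map_mul, map_mul, map_inv] at h1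
    rw [h1]
    exact hm1 _
  have hMnormal : M.Normal := by
    apply closure_normal_of_conj
      (T := Set.range (fun x : α ⊕ β => q (FreeGroup.of x)))
    · have h1 : Set.range (fun x : α ⊕ β => q (FreeGroup.of x)) =
          q '' Set.range (FreeGroup.of : α ⊕ β → FreeGroup (α ⊕ β)) := by
        rw [← Set.range_comp]; rfl
      rw [h1, ← MonoidHom.map_closure, FreeGroup.closure_range_of, ← MonoidHom.range_eq_map]
      exact MonoidHom.range_eq_top.2 (QuotientGroup.mk'_surjective K)
    · rintro _ ⟨x, rfl⟩ _ ⟨a, rfl⟩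
      cases x with
      | inl a' =>
        constructor
        · exact mul_mem (mul_mem (Subgroup.subset_closure ⟨a', rfl⟩)
            (Subgroup.subset_closure ⟨a, rfl⟩)) (inv_mem (Subgroup.subset_closure ⟨a', rfl⟩))
        · exact mul_mem (mul_mem (inv_mem (Subgroup.subset_closure ⟨a', rfl⟩))
            (Subgroup.subset_closure ⟨a, rfl⟩)) (Subgroup.subset_closure ⟨a', rfl⟩)
      | inr b =>
        constructor
        · have := hm2 a b true
          simpa [hcW] using this
        · have := hm2 a b false
          simp [hcW] at this
          convert this using 2 <;> exact (inv_inv _).symm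
  haveI := hMnormal
  have hMN : M ≤ N.comap π := by
    rw [hM, Subgroup.closure_le]
    rintro _ ⟨a, rfl⟩
    have : π (q (FreeGroup.of (Sum.inl a))) = ((fN (FreeGroup.of a) : ↥N) : G) := by
      rw [hπq, hfinl]
    simp only [SetLike.mem_coe, Subgroup.mem_comap, this]
    exact SetLike.coe_mem _
  set πbar : (FreeGroup (α ⊕ β) ⧸ K) ⧸ M →* G ⧸ N := QuotientGroup.map M N π hMN
    with hπbar
  -- σ : N →* P
  set hom0 : FreeGroup α →* (FreeGroup (α ⊕ β) ⧸ K) := q.comp ι with hhom0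
  have hker0 : fN.ker ≤ hom0.ker := by
    rw [kerN]
    apply Subgroup.normalClosure_le_normal
    intro s hs
    simp only [SetLike.mem_coe, MonoidHom.mem_ker, hhom0, MonoidHom.comp_apply]
    exact hqR _ (Or.inl (Or.inl ⟨s, hs, rfl⟩))
  set eN := QuotientGroup.quotientKerEquivOfSurjective fN surjN with heN
  set σ : ↥N →* (FreeGroup (α ⊕ β) ⧸ K) :=
    (QuotientGroup.lift fN.ker hom0 hker0).comp eN.symm.toMonoidHom with hσdef
  have hσ : ∀ w : FreeGroup α, σ (fN w) = q (ι w) := by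
    intro w
    have h1 : eN (QuotientGroup.mk w) = fN w := rfl
    have h2 : eN.symm (fN w) = QuotientGroup.mk w := by
      rw [← h1, MulEquiv.symm_apply_apply]
    simp only [hσdef, MonoidHom.comp_apply, MulEquiv.coe_toMonoidHom, h2]
    exact QuotientGroup.lift_mk' fN.ker hker0 w
  -- sbar : G⧸N →* P⧸M
  set mkM : (FreeGroup (α ⊕ β) ⧸ K) →* ((FreeGroup (α ⊕ β) ⧸ K) ⧸ M) :=
    QuotientGroup.mk' M with hmkM
  set hom1 : FreeGroup β →* ((FreeGroup (α ⊕ β) ⧸ K) ⧸ M) := mkM.comp (q.comp κ) with hhom1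
  have hker1 : fQ.ker ≤ hom1.ker := by
    rw [kerQ]
    apply Subgroup.normalClosure_le_normal
    intro t ht
    have h1 := hqR _ (Or.inl (Or.inr ⟨t, ht, rfl⟩))
    rw [map_mul, map_inv, mul_inv_eq_one] at h1
    simp only [SetLike.mem_coe, MonoidHom.mem_ker, hhom1, MonoidHom.comp_apply]
    rw [h1]
    exact (QuotientGroup.eq_one_iff _).2 (hm1 _)
  set eQ := QuotientGroup.quotientKerEquivOfSurjective fQ surjQ with heQ
  set sbar : G ⧸ N →* ((FreeGroup (α ⊕ β) ⧸ K) ⧸ M) :=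
    (QuotientGroup.lift fQ.ker hom1 hker1).comp eQ.symm.toMonoidHom with hsbardef
  have hsbar : ∀ w : FreeGroup β, sbar (fQ w) = mkM (q (κ w)) := by
    intro w
    have h1 : eQ (QuotientGroup.mk w) = fQ w := rfl
    have h2 : eQ.symm (fQ w) = QuotientGroup.mk w := by
      rw [← h1, MulEquiv.symm_apply_apply]
    simp only [hsbardef, MonoidHom.comp_apply, MulEquiv.coe_toMonoidHom, h2]
    exact QuotientGroup.lift_mk' fQ.ker hker1 w
  -- sbar ∘ πbar = id (on classes of q)
  have hπb : ∀ w : FreeGroup (α ⊕ β),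
      πbar (mkM (q w)) = QuotientGroup.mk (f w) := by
    intro w
    rw [hπbar, hmkM, QuotientGroup.map_mk']
    rw [← hπq w]
  have key : sbar.comp ((QuotientGroup.mk' N).comp f) = mkM.comp q := by
    apply FreeGroup.ext_hom
    intro x
    cases x with
    | inl a =>
      have hl : ((QuotientGroup.mk' N) (f (FreeGroup.of (Sum.inl a))) : G ⧸ N) = 1 := by
        refine (QuotientGroup.eq_one_iff _).2 ?_
        rw [hfinl a]; exact SetLike.coe_mem _
      have hr : mkM (q (FreeGroup.of (Sum.inl a))) = 1 := by
        refine (QuotientGroup.eq_one_iff _).2 ?_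
        have : q (ι (FreeGroup.of a)) ∈ M := hm1 _
        simpa [hι] using this
      simp only [MonoidHom.comp_apply]
      rw [hl, hr, map_one]
    | inr b =>
      simp only [MonoidHom.comp_apply]
      have h1 : (QuotientGroup.mk' N) (f (FreeGroup.of (Sum.inr b))) = fQ (FreeGroup.of b) := by
        rw [QuotientGroup.mk'_apply, hfinr b, hℓ b]
      rw [h1, hsbar]
      have : κ (FreeGroup.of b) = FreeGroup.of (Sum.inr b) := by
        rw [hκ]; exact FreeGroup.map.of
      rw [this]
  have hsp : ∀ w : FreeGroup (α ⊕ β), sbar (πbar (mkM (q w))) = mkM (q w) := by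
    intro w
    have hkey := DFunLike.congr_fun key w
    simp only [MonoidHom.comp_apply, QuotientGroup.mk'_apply] at hkey
    rw [hπb w]
    exact hkey
  -- retraction on M
  have hret : ∀ p ∈ M, ∃ h : π p ∈ N, σ ⟨π p, h⟩ = p := by
    intro p hp
    refine Subgroup.closure_induction ?_ ?_ ?_ ?_ hp
    · rintro _ ⟨a, rfl⟩
      have h1 : π (q (FreeGroup.of (Sum.inl a))) = ((fN (FreeGroup.of a) : ↥N) : G) := by
        rw [hπq, hfinl]
      have hmem : π (q (FreeGroup.of (Sum.inl a))) ∈ N := h1 ▸ SetLike.coe_mem _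
      refine ⟨hmem, ?_⟩
      have h2 : (⟨π (q (FreeGroup.of (Sum.inl a))), hmem⟩ : ↥N) = fN (FreeGroup.of a) :=
        Subtype.ext h1
      rw [h2, hσ]
      have : ι (FreeGroup.of a) = FreeGroup.of (Sum.inl a) := by
        rw [hι]; exact FreeGroup.map.of
      rw [this]
    · have hmem : π (1 : FreeGroup (α ⊕ β) ⧸ K) ∈ N := by
        rw [map_one]; exact N.one_mem
      refine ⟨hmem, ?_⟩
      have h2 : (⟨π (1 : FreeGroup (α ⊕ β) ⧸ K), hmem⟩ : ↥N) = 1 := Subtype.ext (by simp)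
      rw [h2, map_one]
    · rintro x y hx hy ⟨hx1, hx2⟩ ⟨hy1, hy2⟩
      have hmem : π (x * y) ∈ N := by rw [map_mul]; exact N.mul_mem hx1 hy1
      refine ⟨hmem, ?_⟩
      have h2 : (⟨π (x * y), hmem⟩ : ↥N) = ⟨π x, hx1⟩ * ⟨π y, hy1⟩ := Subtype.ext (by simp)
      rw [h2, map_mul, hx2, hy2]
    · rintro x hx ⟨hx1, hx2⟩
      have hmem : π x⁻¹ ∈ N := by rw [map_inv]; exact N.inv_mem hx1
      refine ⟨hmem, ?_⟩
      have h2 : (⟨π x⁻¹, hmem⟩ : ↥N) = (⟨π x, hx1⟩)⁻¹ := Subtype.ext (by simp)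
      rw [h2, map_inv, hx2]
  -- conclude
  apply fp_of_presentation (α ⊕ β) f hsurj R hRfin
  apply le_antisymm
  · intro w hw
    have hfw : f w = 1 := hw
    have h1 : πbar (mkM (q w)) = 1 := by
      rw [hπb w, hfw]
      simp
    have h2 : mkM (q w) = 1 := by
      have := hsp w
      rw [h1, map_one] at this
      exact this.symm
    have h3 : q w ∈ M := (QuotientGroup.eq_one_iff _).1 h2
    obtain ⟨hn, hσn⟩ := hret (q w) h3
    have h4 : π (q w) = 1 := by rw [hπq, hfw]
    have h5 : (⟨π (q w), hn⟩ : ↥N) = 1 := Subtype.ext (by simpa using h4)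
    rw [h5, map_one] at hσn
    exact (QuotientGroup.eq_one_iff w).1 hσn.symm
  · exact Subgroup.normalClosure_le_normal (fun r hr => MonoidHom.mem_ker.2 (hRker r hr))


theorem subgroup_fg_of_map_fg {G H : Type*} [Group G] [Group H] (φ : G →* H)
    (hinj : Function.Injective φ) (L : Subgroup G) (h : (L.map φ).FG) : L.FG := by
  rw [← Group.fg_iff_subgroup_fg] at h ⊢
  haveI := h
  exact Group.fg_of_surjective (f := (L.equivMapOfInjective φ hinj).symm.toMonoidHom)
    (L.equivMapOfInjective φ hinj).symm.surjective

theorem closure_singleton_gen {G : Type*} [Group G] (g : G) :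
    Subgroup.closure ({⟨g, Subgroup.mem_closure_singleton_self g⟩} :
      Set ↥(Subgroup.closure ({g} : Set G))) = ⊤ := by
  have h := Subgroup.closure_preimage_eq_top ({g} : Set G)
  rw [← h]
  congr 1
  ext x
  simp [Subtype.ext_iff]

theorem fp_of_comm_aux (n : ℕ) : ∀ (A : Type*) [CommGroup A] (s : Finset A),
    s.card ≤ n → Subgroup.closure (s : Set A) = ⊤ → FinitelyPresented A := by
  induction n with
  | zero =>
    intro A _ s hcard hgen
    have hs : s = ∅ := Finset.card_eq_zero.1 (le_antisymm hcard (Nat.zero_le _))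
    subst hs
    have : Subsingleton A := by
      constructor
      intro a b
      have h1 : ∀ x : A, x = 1 := by
        intro x
        have hx : x ∈ Subgroup.closure ((∅ : Finset A) : Set A) := by
          rw [hgen]; trivial
        rw [Finset.coe_empty, Subgroup.closure_empty] at hx
        exact Subgroup.mem_bot.1 hx
      rw [h1 a, h1 b]
    exact fp_of_finite A
  | succ n ih =>
    intro A _ s hcard hgen
    classical
    rcases s.eq_empty_or_nonempty with rfl | ⟨g, hg⟩
    · exact ih A ∅ (Nat.zero_le n) (by simpa using hgen)
    · set N := Subgroup.closure ({g} : Set A) with hN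
      have hNfp : FinitelyPresented ↥N := fp_of_cyclic _ (closure_singleton_gen g)
      have hg1 : (QuotientGroup.mk g : A ⧸ N) = 1 :=
        (QuotientGroup.eq_one_iff g).2 (Subgroup.mem_closure_singleton_self g)
      have hQfp : FinitelyPresented (A ⧸ N) := by
        refine ih (A ⧸ N) ((s.erase g).image (QuotientGroup.mk : A → A ⧸ N)) ?_ ?_
        · exact Finset.card_image_le.trans
            (by rw [Finset.card_erase_of_mem hg]; omega)
        · have hmk : Subgroup.closure ((QuotientGroup.mk : A → A ⧸ N) '' ↑s) = ⊤ := by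
            rw [show ((QuotientGroup.mk : A → A ⧸ N) '' ↑s) =
                ⇑(QuotientGroup.mk' N) '' ↑s from rfl,
              ← MonoidHom.map_closure, hgen, ← MonoidHom.range_eq_map]
            exact MonoidHom.range_eq_top.2 (QuotientGroup.mk'_surjective N)
          have hsub : (QuotientGroup.mk : A → A ⧸ N) '' ↑s ⊆
              insert 1 (↑((s.erase g).image (QuotientGroup.mk : A → A ⧸ N))) := by
            rintro _ ⟨a, ha, rfl⟩
            by_cases hag : a = g
            · subst hag
              exact Set.mem_insert_iff.2 (Or.inl hg1)
            · right
              simp only [Finset.coe_image, Set.mem_image, Finset.mem_coe]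
              exact ⟨a, Finset.mem_erase.2 ⟨hag, ha⟩, rfl⟩
          have h2 : Subgroup.closure (insert (1 : A ⧸ N)
              (↑((s.erase g).image (QuotientGroup.mk : A → A ⧸ N)))) ≤
              Subgroup.closure (↑((s.erase g).image (QuotientGroup.mk : A → A ⧸ N))) := by
            rw [Subgroup.closure_le]
            intro x hx
            rcases Set.mem_insert_iff.1 hx with rfl | hx'
            · exact Subgroup.one_mem _
            · exact Subgroup.subset_closure hx'
          have h3 : (⊤ : Subgroup (A ⧸ N)) ≤
              Subgroup.closure (↑((s.erase g).image (QuotientGroup.mk : A → A ⧸ N))) :=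
            hmk ▸ (Subgroup.closure_mono hsub).trans h2
          exact le_antisymm le_top h3
      exact fp_extension N hNfp hQfp

theorem all_subgroups_fg {G : Type*} [Group G] (h : ∀ H : Subgroup G, H.FG)
    (K : Subgroup G) : ∀ L : Subgroup ↥K, L.FG := fun L =>
  subgroup_fg_of_map_fg K.subtype K.subtype_injective L (h _)

theorem fp_of_poly_aux (n : ℕ) : ∀ (G : Type*) [Group G],
    (∀ H : Subgroup G, H.FG) → derivedSeries G n = ⊥ → FinitelyPresented G := by
  induction n with
  | zero =>
    intro G _ hfg hder
    rw [derivedSeries_zero] at hder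
    have : Subsingleton G := by
      constructor
      intro a b
      have h1 : ∀ x : G, x = 1 := fun x =>
        Subgroup.mem_bot.1 (hder ▸ Subgroup.mem_top x)
      rw [h1 a, h1 b]
    exact fp_of_finite G
  | succ n ih =>
    intro G _ hfg hder
    set N := derivedSeries G 1 with hN
    haveI : N.Normal := derivedSeries_normal G 1
    have hmap : ∀ k, Subgroup.map N.subtype (derivedSeries ↥N k) ≤ derivedSeries G (k + 1) := by
      intro k
      induction k with
      | zero =>
        rw [derivedSeries_zero, ← MonoidHom.range_eq_map, N.range_subtype]
      | succ k ihk =>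
        rw [derivedSeries_succ, Subgroup.map_commutator, derivedSeries_succ]
        exact Subgroup.commutator_mono ihk ihk
    have hNder : derivedSeries ↥N n = ⊥ := by
      have h1 := (hmap n).trans (le_of_eq hder)
      rw [le_bot_iff] at h1
      exact (Subgroup.map_eq_bot_iff_of_injective
        (H := derivedSeries ↥N n) (f := N.subtype) N.subtype_injective).1 h1
    have hNfp : FinitelyPresented ↥N := ih ↥N (all_subgroups_fg hfg N) hNder
    haveI : Group.FG G := Group.fg_def.2 (hfg ⊤)
    haveI : Group.FG (Abelianization G) :=
      Group.fg_of_surjective (f := QuotientGroup.mk' (commutator G))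
        (QuotientGroup.mk'_surjective _)
    have hab : FinitelyPresented (Abelianization G) := by
      obtain ⟨t, ht⟩ := Group.fg_def.1 ‹Group.FG (Abelianization G)›
      exact fp_of_comm_aux t.card (Abelianization G) t le_rfl ht
    have hQ : FinitelyPresented (G ⧸ N) :=
      hab.of_mulEquiv (QuotientGroup.quotientMulEquivOfEq (derivedSeries_one G).symm)
    exact fp_extension N hNfp hQ

theorem fp_of_polycyclic {G : Type*} [Group G]
    (h : IsSolvable G ∧ ∀ H : Subgroup G, H.FG) : FinitelyPresented G := by
  obtain ⟨⟨n, hn⟩, hfg⟩ := h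
  exact fp_of_poly_aux n G hfg hn

theorem virtuallyPolycyclic_finitelyPresented'
    (G : Type*) [Group G]
    (h : ∃ H : Subgroup G, H.FiniteIndex ∧ (IsSolvable ↥H ∧ ∀ L : Subgroup ↥H, L.FG)) :
    FinitelyPresented G := by
  obtain ⟨H, hfi, hsolv, hfg⟩ := h
  haveI := hfi
  set K := H.normalCore with hK
  haveI : K.FiniteIndex := inferInstance
  haveI : Finite (G ⧸ K) := inferInstance
  have hpolyK : IsSolvable ↥K ∧ ∀ L : Subgroup ↥K, L.FG := by
    constructor
    · haveI : Group.IsSolvable ↥H := hsolv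
      exact solvable_of_solvable_injective (Subgroup.inclusion_injective H.normalCore_le)
    · intro L
      exact subgroup_fg_of_map_fg (Subgroup.inclusion H.normalCore_le)
        (Subgroup.inclusion_injective _) L (hfg _)
  exact fp_extension K (fp_of_polycyclic hpolyK) (fp_of_finite _)

end AuxFP

/-- A finitely generated virtually polycyclic group is finitely presented. -/
theorem virtuallyPolycyclic_finitelyPresented
    (G : Type*) [Group G] [Group.FG G] (h : IsVirtuallyPolycyclic G) :
    FinitelyPresented G := by
  obtain ⟨H, hfi, hpoly⟩ := h
  exact virtuallyPolycyclic_finitelyPresented' G ⟨H, hfi, hpoly⟩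
end

section
/- Let G be a finitely generated solvable group that is not virtually nilpotent. Then G has a quotient K that is just non-virtually-nilpotent, i.e., K is not virtually nilpotent but every proper quotient of K is virtually nilpotent. -/
/-- A quotient `K` is just non-virtually-nilpotent if it is not virtually nilpotent
but every proper quotient of it is. -/
def JustNonVirtuallyNilpotent (K : Type*) [Group K] : Prop :=
  ¬ IsVirtuallyNilpotent K ∧
    ∀ (M : Subgroup K) [M.Normal], M ≠ ⊥ → IsVirtuallyNilpotent (K ⧸ M)

open scoped commutatorElement

namespace JNVNAux

variable {G : Type*} [Group G]

/-- Left-normed iterated commutator. -/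
def wcomm (x : G) : List G → G
  | [] => x
  | a :: l => wcomm ⁅x, a⁆ l

lemma wcomm_append (x : G) (l l' : List G) :
    wcomm x (l ++ l') = wcomm (wcomm x l) l' := by
  induction l generalizing x with
  | nil => rfl
  | cons a l ih => simp [wcomm, ih]

lemma map_wcomm {H : Type*} [Group H] (f : G →* H) (x : G) (l : List G) :
    f (wcomm x l) = wcomm (f x) (l.map f) := by
  induction l generalizing x with
  | nil => rfl
  | cons a l ih => simp [wcomm, ih, map_commutatorElement]

lemma wcomm_mem_lcs_of_mem {n : ℕ} {x : G} (hx : x ∈ Subgroup.lowerCentralSeries (⊤ : Subgroup G) n)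
    (l : List G) : wcomm x l ∈ Subgroup.lowerCentralSeries (⊤ : Subgroup G) (n + l.length) := by
  induction l generalizing x n with
  | nil => simpa [wcomm] using hx
  | cons a l ih =>
    have hx' : ⁅x, a⁆ ∈ Subgroup.lowerCentralSeries (⊤ : Subgroup G) (n + 1) := by
      rw [lowerCentralSeries_succ]
      exact Subgroup.commutator_mem_commutator hx (Subgroup.mem_top a)
    have := ih hx'
    simpa [wcomm, Nat.add_comm, Nat.add_assoc, Nat.add_left_comm] using this

lemma wcomm_mem_lcs (x : G) (l : List G) :
    wcomm x l ∈ Subgroup.lowerCentralSeries (⊤ : Subgroup G) l.length := by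
  simpa using wcomm_mem_lcs_of_mem (by simp : x ∈ Subgroup.lowerCentralSeries (⊤ : Subgroup G) 0) l

/-- elements whose commutators with everything lie in `M`. -/
def commD (M : Subgroup G) [M.Normal] : Subgroup G where
  carrier := {m | ∀ g : G, ⁅m, g⁆ ∈ M}
  one_mem' := fun g => by simpa [commutatorElement_one_left] using M.one_mem
  mul_mem' := by
    intro a b ha hb g
    have h : ⁅a * b, g⁆ = a * ⁅b, g⁆ * a⁻¹ * ⁅a, g⁆ := by
      simp only [commutatorElement_def]; group
    rw [h]
    exact M.mul_mem (‹M.Normal›.conj_mem _ (hb g) a) (ha g)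
  inv_mem' := by
    intro a ha g
    have h : ⁅a⁻¹, g⁆ = a⁻¹ * ⁅a, g⁆⁻¹ * a := by
      simp only [commutatorElement_def]; group
    rw [h]
    have := ‹M.Normal›.conj_mem _ (M.inv_mem (ha g)) a⁻¹
    simpa using this

instance commD_normal (M : Subgroup G) [M.Normal] : (commD M).Normal := by
  constructor
  intro m hm x g
  have h : ⁅x * m * x⁻¹, g⁆ = x * ⁅m, x⁻¹ * g * x⁆ * x⁻¹ := by
    simp only [commutatorElement_def]; group
  rw [h]
  exact ‹M.Normal›.conj_mem _ (hm _) x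

/-- elements `g` with `⁅t, g⁆ ∈ M`. -/
def commE (t : G) (M : Subgroup G) [M.Normal] : Subgroup G where
  carrier := {g | ⁅t, g⁆ ∈ M}
  one_mem' := by simpa [commutatorElement_one_right] using M.one_mem
  mul_mem' := by
    intro a b ha hb
    have h : ⁅t, a * b⁆ = ⁅t, a⁆ * (a * ⁅t, b⁆ * a⁻¹) := by
      simp only [commutatorElement_def]; group
    show ⁅t, a * b⁆ ∈ M
    rw [h]
    exact M.mul_mem ha (‹M.Normal›.conj_mem _ hb a)
  inv_mem' := by
    intro a ha
    have h : ⁅t, a⁻¹⁆ = a⁻¹ * ⁅t, a⁆⁻¹ * a := by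
      simp only [commutatorElement_def]; group
    show ⁅t, a⁻¹⁆ ∈ M
    rw [h]
    have := ‹M.Normal›.conj_mem _ (M.inv_mem ha) a⁻¹
    simpa using this

/-- set of left-normed commutators of weight `n+1` with entries in `S`. -/
def commSet (S : Set G) (n : ℕ) : Set G :=
  {x | ∃ s ∈ S, ∃ l : List G, (∀ a ∈ l, a ∈ S) ∧ l.length = n ∧ wcomm s l = x}

lemma lcs_le_normalClosure_commSet {S : Set G} (hS : Subgroup.closure S = ⊤) :
    ∀ n, Subgroup.lowerCentralSeries (⊤ : Subgroup G) n ≤ Subgroup.normalClosure (commSet S n) := by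
  intro n
  induction n with
  | zero =>
    have h1 : S ⊆ commSet S 0 := fun x hx => ⟨x, hx, [], by simp, rfl, rfl⟩
    calc Subgroup.lowerCentralSeries (⊤ : Subgroup G) 0 = ⊤ := Subgroup.lowerCentralSeries_zero _
    _ = Subgroup.closure S := hS.symm
    _ ≤ Subgroup.normalClosure S :=
        (Subgroup.closure_le _).2 Subgroup.subset_normalClosure
    _ ≤ _ := Subgroup.normalClosure_mono h1
  | succ n ih =>
    rw [lowerCentralSeries_succ]
    have hD : Subgroup.normalClosure (commSet S n) ≤
        commD (Subgroup.normalClosure (commSet S (n + 1))) := by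
      apply Subgroup.normalClosure_le_normal
      rintro x ⟨s, hs, l, hl, hlen, rfl⟩
      intro g
      have hE : Subgroup.closure S ≤
          commE (wcomm s l) (Subgroup.normalClosure (commSet S (n + 1))) := by
        rw [Subgroup.closure_le]
        intro s' hs'
        have hmem : ∀ a ∈ l ++ [s'], a ∈ S := by
          intro a ha
          rcases List.mem_append.1 ha with h | h
          · exact hl a h
          · simpa using (List.mem_singleton.1 h) ▸ hs'
        have hval : wcomm s (l ++ [s']) = ⁅wcomm s l, s'⁆ := by
          rw [wcomm_append]; rfl
        exact Subgroup.subset_normalClosure ⟨s, hs, l ++ [s'], hmem, by simp [hlen], hval⟩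
      have hg : g ∈ commE (wcomm s l) (Subgroup.normalClosure (commSet S (n + 1))) := by
        apply hE; rw [hS]; trivial
      exact hg
    refine Subgroup.commutator_le.2 fun m hm g _ => ?_
    exact hD (ih hm) g

lemma lcs_eq_bot_of_wcomm_eq_one {S : Set G} (hS : Subgroup.closure S = ⊤) {n : ℕ}
    (h : ∀ s ∈ S, ∀ l : List G, (∀ a ∈ l, a ∈ S) → l.length = n → wcomm s l = 1) :
    Subgroup.lowerCentralSeries (⊤ : Subgroup G) n = ⊥ := by
  have h2 : commSet S n ⊆ ((⊥ : Subgroup G) : Set G) := by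
    rintro x ⟨s, hs, l, hl, hlen, rfl⟩
    simp [h s hs l hl hlen]
  exact le_bot_iff.1 ((lcs_le_normalClosure_commSet hS n).trans
    (Subgroup.normalClosure_le_normal h2))

end JNVNAux
namespace JNVNAux

variable {G : Type*} [Group G]

lemma commSet_finite {S : Set G} (hS : S.Finite) : ∀ n, (commSet S n).Finite := by
  intro n
  induction n with
  | zero =>
    refine hS.subset ?_
    rintro x ⟨s, hs, l, hl, hlen, rfl⟩
    rw [List.length_eq_zero_iff] at hlen
    subst hlen
    exact hs
  | succ n ih =>
    have hsub : commSet S (n + 1) ⊆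
        (fun p : G × G => ⁅p.1, p.2⁆) '' ((commSet S n) ×ˢ S) := by
      rintro x ⟨s, hs, l, hl, hlen, rfl⟩
      obtain ⟨l₀, a, rfl⟩ : ∃ l₀ a, l = l₀ ++ [a] := by
        rcases hr : l.reverse with _ | ⟨a, r⟩
        · exfalso
          have : l = [] := by simpa using congrArg List.reverse hr
          subst this; simp at hlen
        · refine ⟨r.reverse, a, ?_⟩
          rw [← List.reverse_reverse l, hr]
          simp
      have hlen0 : l₀.length = n := by simpa using hlen
      refine ⟨(wcomm s l₀, a), ⟨⟨s, hs, l₀, fun b hb => hl b (by simp [hb]), hlen0, rfl⟩,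
        hl a (by simp)⟩, ?_⟩
      rw [wcomm_append]
      rfl
    exact ((ih.prod hS).image _).subset hsub

lemma exists_mem_of_finite_subset {c : Set (Subgroup G)} (hd : DirectedOn (· ≤ ·) c)
    (hne : c.Nonempty) {F : Set G} (hF : F.Finite)
    (h : ∀ x ∈ F, ∃ K ∈ c, x ∈ K) : ∃ K ∈ c, F ⊆ K := by
  revert h
  refine Set.Finite.induction_on (motive := fun F _ =>
      (∀ x ∈ F, ∃ K ∈ c, x ∈ K) → ∃ K ∈ c, F ⊆ K) _ hF
    (fun _ => ⟨hne.choose, hne.choose_spec, by simp⟩) ?_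
  intro a F' ha hF' ih h
  obtain ⟨K₁, hK₁, hsub⟩ := ih fun x hx => h x (Set.mem_insert_of_mem _ hx)
  obtain ⟨K₂, hK₂, haK⟩ := h a (Set.mem_insert _ _)
  obtain ⟨K, hK, h1, h2⟩ := hd _ hK₁ _ hK₂
  exact ⟨K, hK, Set.insert_subset_iff.2 ⟨h2 haK, hsub.trans h1⟩⟩

lemma exists_list_preimage {H : Type*} [Group H] (f : G →* H) (T : Set G) :
    ∀ l : List H, (∀ b ∈ l, b ∈ f '' T) → ∃ l' : List G, (∀ a ∈ l', a ∈ T) ∧ l'.map f = l := by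
  intro l
  induction l with
  | nil => exact fun _ => ⟨[], by simp, rfl⟩
  | cons b l ih =>
    intro h
    obtain ⟨l', hl', hmap⟩ := ih fun x hx => h x (List.mem_cons_of_mem _ hx)
    obtain ⟨a, ha, rfl⟩ := h b (List.mem_cons_self)
    exact ⟨a :: l', by simpa [ha] using hl', by simp [hmap]⟩

lemma wcomm_mem_map_lcs {K : Type*} [Group K] (H' : Subgroup K) :
    ∀ (l : List K), (∀ a ∈ l, a ∈ H') → ∀ (k : ℕ) (x : K),
      x ∈ (Subgroup.lowerCentralSeries (⊤ : Subgroup H') k).map H'.subtype →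
      wcomm x l ∈ (Subgroup.lowerCentralSeries (⊤ : Subgroup H') (k + l.length)).map H'.subtype := by
  intro l
  induction l with
  | nil => intro _ k x hx; simpa [wcomm] using hx
  | cons a l ih =>
    intro hl k x hx
    obtain ⟨y, hy, rfl⟩ := Subgroup.mem_map.1 hx
    have haH : a ∈ H' := hl a (List.mem_cons_self)
    have hcomm : ⁅H'.subtype y, a⁆ ∈ (Subgroup.lowerCentralSeries (⊤ : Subgroup H') (k + 1)).map H'.subtype := by
      refine Subgroup.mem_map.2 ⟨⁅y, (⟨a, haH⟩ : H')⁆, ?_, ?_⟩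
      · rw [lowerCentralSeries_succ]
        exact Subgroup.commutator_mem_commutator hy (Subgroup.mem_top _)
      · simp [map_commutatorElement]
    have hres := ih (fun b hb => hl b (List.mem_cons_of_mem a hb)) (k + 1) _ hcomm
    have harith : k + 1 + l.length = k + (a :: l).length := by
      simp only [List.length_cons]; omega
    rw [harith] at hres
    exact hres

lemma wcomm_eq_one_of_lcs_eq_bot {K : Type*} [Group K] {H' : Subgroup K} {n : ℕ}
    (h : Subgroup.lowerCentralSeries (⊤ : Subgroup H') n = ⊥) {x : K} (hx : x ∈ H') {l : List K}
    (hl : ∀ a ∈ l, a ∈ H') (hlen : l.length = n) : wcomm x l = 1 := by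
  have h0 : x ∈ (Subgroup.lowerCentralSeries (⊤ : Subgroup H') 0).map H'.subtype :=
    Subgroup.mem_map.2 ⟨⟨x, hx⟩, by simp, rfl⟩
  have := wcomm_mem_map_lcs H' l hl 0 x h0
  rw [Nat.zero_add, hlen, h] at this
  simpa using this

end JNVNAux
namespace JNVNAux

lemma vn_of_mulEquiv {A B : Type*} [Group A] [Group B] (e : A ≃* B)
    (h : IsVirtuallyNilpotent A) : IsVirtuallyNilpotent B := by
  obtain ⟨H, hfi, hnil⟩ := h
  refine ⟨H.map e.toMonoidHom, ?_, ?_⟩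
  · constructor
    rw [Subgroup.index_map_eq H e.surjective
      (by rw [(MonoidHom.ker_eq_bot_iff e.toMonoidHom).2 e.injective]; exact bot_le)]
    exact hfi.index_ne_zero
  · haveI := hnil
    exact nilpotent_of_mulEquiv (e.subgroupMap H)

lemma vn_quotient_congr {G' : Type*} [Group G'] (A B : Subgroup G') [hA : A.Normal]
    [hB : B.Normal] (h : A = B) (hvn : IsVirtuallyNilpotent (G' ⧸ A)) :
    IsVirtuallyNilpotent (G' ⧸ B) := by
  subst h
  exact hvn

lemma chain_step {G : Type*} [Group G] [Group.FG G] {c : Set (Subgroup G)}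
    (hchain : IsChain (· ≤ ·) c) (hne : c.Nonempty) (hnorm : ∀ K ∈ c, K.Normal)
    (hNn : (sSup c).Normal)
    (hvn : @IsVirtuallyNilpotent (G ⧸ sSup c) (@QuotientGroup.Quotient.group G _ _ hNn)) :
    ∃ K ∈ c, ∃ hKn : K.Normal,
      @IsVirtuallyNilpotent (G ⧸ K) (@QuotientGroup.Quotient.group G _ K hKn) := by
  haveI := hNn
  obtain ⟨H', hfi, hnil⟩ := hvn
  haveI := hfi
  haveI := hnil
  have hπs : Function.Surjective (QuotientGroup.mk' (sSup c)) :=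
    QuotientGroup.mk'_surjective (sSup c)
  haveI hHfi : (H'.comap (QuotientGroup.mk' (sSup c))).FiniteIndex :=
    ⟨by rw [Subgroup.index_comap_of_surjective _ hπs]; exact hfi.index_ne_zero⟩
  haveI : Group.FG (H'.comap (QuotientGroup.mk' (sSup c))) :=
    Subgroup.fg_of_index_ne_zero _
  obtain ⟨T, hT⟩ : (H'.comap (QuotientGroup.mk' (sSup c))).FG :=
    (Group.fg_iff_subgroup_fg _).1 inferInstance
  obtain ⟨n, hlcs⟩ := nilpotent_iff_lowerCentralSeries.1 hnil
  have hTH : ∀ t ∈ T, t ∈ H'.comap (QuotientGroup.mk' (sSup c)) :=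
    fun t ht => hT ▸ Subgroup.subset_closure ht
  have hTH' : ∀ t ∈ T, QuotientGroup.mk' (sSup c) t ∈ H' :=
    fun t ht => Subgroup.mem_comap.1 (hTH t ht)
  -- all weight-(n+1) commutators of the generators lie in sSup c
  have hcomm : ∀ x ∈ commSet (↑T : Set G) n, x ∈ sSup c := by
    rintro _ ⟨t, ht, l, hl, hlen, rfl⟩
    have h1 : wcomm (QuotientGroup.mk' (sSup c) t)
        (l.map (QuotientGroup.mk' (sSup c))) = 1 := by
      refine wcomm_eq_one_of_lcs_eq_bot hlcs (hTH' t ht) ?_ (by simp [hlen])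
      intro b hb
      obtain ⟨a, ha, rfl⟩ := List.mem_map.1 hb
      exact hTH' a (hl a ha)
    have h2 : QuotientGroup.mk' (sSup c) (wcomm t l) = 1 := by rw [map_wcomm]; exact h1
    rwa [← QuotientGroup.ker_mk' (sSup c), MonoidHom.mem_ker]
  obtain ⟨K, hK, hsub⟩ := exists_mem_of_finite_subset hchain.directedOn hne
    (commSet_finite T.finite_toSet n)
    (fun x hx => (Subgroup.mem_sSup_of_directedOn hne hchain.directedOn).1 (hcomm x hx))
  haveI hKn := hnorm K hK
  refine ⟨K, hK, hKn, ?_⟩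
  have hρs : Function.Surjective (QuotientGroup.mk' K) := QuotientGroup.mk'_surjective K
  have hKN : K ≤ sSup c := le_sSup hK
  have hNH : sSup c ≤ H'.comap (QuotientGroup.mk' (sSup c)) := by
    intro x hx
    have hx1 : QuotientGroup.mk' (sSup c) x = 1 := by
      rw [← MonoidHom.mem_ker, QuotientGroup.ker_mk']
      exact hx
    rw [Subgroup.mem_comap, hx1]
    exact H'.one_mem
  refine ⟨Subgroup.closure ((QuotientGroup.mk' K) '' (T : Set G)), ?_, ?_⟩
  · constructor
    rw [← MonoidHom.map_closure, hT, Subgroup.index_map_eq _ hρs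
      (by rw [QuotientGroup.ker_mk']; exact hKN.trans hNH)]
    exact hHfi.index_ne_zero
  · refine nilpotent_iff_lowerCentralSeries.2 ⟨n, ?_⟩
    refine lcs_eq_bot_of_wcomm_eq_one
      (Subgroup.closure_closure_coe_preimage
        (k := (QuotientGroup.mk' K) '' (T : Set G))) ?_
    rintro s hs l hl hlen
    have hinj : Function.Injective
        (Subgroup.closure ((QuotientGroup.mk' K) '' (T : Set G))).subtype :=
      Subgroup.subtype_injective _
    apply hinj
    rw [map_wcomm, map_one]
    obtain ⟨t, ht, hts⟩ := hs
    have hbmem : ∀ b ∈ l.map (Subgroup.closure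
        ((QuotientGroup.mk' K) '' (T : Set G))).subtype,
        b ∈ (QuotientGroup.mk' K) '' (T : Set G) := by
      intro b hb
      obtain ⟨a, ha, rfl⟩ := List.mem_map.1 hb
      exact hl a ha
    obtain ⟨l', hl', hmap⟩ := exists_list_preimage (QuotientGroup.mk' K) (↑T)
      (l.map (Subgroup.closure ((QuotientGroup.mk' K) '' (T : Set G))).subtype) hbmem
    have hlen' : l'.length = n := by
      have := congrArg List.length hmap
      exact (List.length_map _).symm.trans ((this.trans (List.length_map _)).trans hlen)
    have hmem : wcomm t l' ∈ K := hsub ⟨t, ht, l', hl', hlen', rfl⟩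
    have hval : QuotientGroup.mk' K (wcomm t l') = 1 := by
      rw [← MonoidHom.mem_ker, QuotientGroup.ker_mk']
      exact hmem
    rw [map_wcomm] at hval
    rw [← hmap]
    have hts' : QuotientGroup.mk' K t
        = (Subgroup.closure ((QuotientGroup.mk' K) '' (T : Set G))).subtype s := hts
    rw [← hts']
    exact hval

end JNVNAux

open JNVNAux in
/-- A finitely generated solvable group which is not virtually nilpotent has a
just non-virtually-nilpotent quotient. -/
theorem exists_just_non_virtuallyNilpotent_quotient
    (G : Type*) [Group G] [Group.FG G] [Group.IsSolvable G]
    (hG : ¬ IsVirtuallyNilpotent G) :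
    ∃ (N : Subgroup G) (hN : N.Normal),
      @JustNonVirtuallyNilpotent (G ⧸ N) (@QuotientGroup.Quotient.group G _ N hN) := by
  classical
  let s : Set (Subgroup G) := {N | ∃ h : N.Normal,
    ¬ @IsVirtuallyNilpotent (G ⧸ N) (@QuotientGroup.Quotient.group G _ N h)}
  have hbot : (⊥ : Subgroup G) ∈ s := by
    refine ⟨inferInstance, fun h => hG ?_⟩
    exact vn_of_mulEquiv (QuotientGroup.quotientBot : G ⧸ (⊥ : Subgroup G) ≃* G) h
  have hchaincond : ∀ c' ⊆ s, IsChain (· ≤ ·) c' → ∀ y ∈ c',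
      ∃ ub ∈ s, ∀ z ∈ c', z ≤ ub := by
    intro c' hc's hchain y hy
    have hnorm : ∀ K ∈ c', K.Normal := fun K hK => (hc's hK).choose
    have hNn : (sSup c').Normal := by
      constructor
      intro x hx g
      rw [Subgroup.mem_sSup_of_directedOn ⟨y, hy⟩ hchain.directedOn] at hx ⊢
      obtain ⟨K, hK, hxK⟩ := hx
      exact ⟨K, hK, (hnorm K hK).conj_mem x hxK g⟩
    refine ⟨sSup c', ⟨hNn, ?_⟩, fun z hz => le_sSup hz⟩
    intro hvn
    obtain ⟨K, hK, hKn, hKvn⟩ := chain_step hchain ⟨y, hy⟩ hnorm hNn hvn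
    exact (hc's hK).choose_spec hKvn
  obtain ⟨m, -, hms, hmax⟩ := zorn_le_nonempty₀ s hchaincond ⊥ hbot
  haveI hmn : m.Normal := hms.choose
  refine ⟨m, hmn, hms.choose_spec, ?_⟩
  intro M hMn hMne
  haveI := hMn
  set N' : Subgroup G := M.comap (QuotientGroup.mk' m) with hN'def
  haveI hN'n : N'.Normal := hMn.comap _
  have hmN' : m ≤ N' := by
    intro x hx
    have hx1 : QuotientGroup.mk' m x = 1 := by
      rw [← MonoidHom.mem_ker, QuotientGroup.ker_mk']
      exact hx
    refine Subgroup.mem_comap.2 ?_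
    rw [hx1]
    exact M.one_mem
  obtain ⟨⟨q, hqM⟩, hqne⟩ := Subgroup.ne_bot_iff_exists_ne_one.1 hMne
  obtain ⟨g, rfl⟩ := QuotientGroup.mk'_surjective m q
  have hgN' : g ∈ N' := hqM
  have hgm : g ∉ m := by
    intro hgm
    apply hqne
    ext
    show QuotientGroup.mk' m g = 1
    rw [← MonoidHom.mem_ker, QuotientGroup.ker_mk']
    exact hgm
  have hN's : N' ∉ s := fun hN's => hgm (hmax hN's hmN' hgN')
  have hVN' : IsVirtuallyNilpotent (G ⧸ N') := by
    by_contra h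
    exact hN's ⟨hN'n, h⟩
  have hMeq : N'.map (QuotientGroup.mk' m) = M :=
    Subgroup.map_comap_eq_self_of_surjective (QuotientGroup.mk'_surjective m) M
  have hstep := vn_of_mulEquiv
    (QuotientGroup.quotientQuotientEquivQuotient m N' hmN').symm hVN'
  exact vn_quotient_congr _ _ hMeq hstep
end
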